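/- arXiv:2510.12394 — 5 statements merged into one kernel-verified Lean document; each statement's English description precedes it below -/
import Mathlib

section
/- With Q the star-shaped plumbing intersection matrix described in the context, det Q = (−1)^{|V|−1} · ( e_0 · p_1 ⋯ p_ν + Σ_{l=1}^{ν} q_l · ∏_{l'≠l} p_{l'} ), where |V| = 1 + s_1 + ⋯ + s_ν. -/
def triD : ℕ → (ℕ → ℚ) → ℚ
  | 0, _ => 1
  | 1, f => f 0
  | (n+2), f => f 0 * triD (n+1) (fun i => f (i+1)) - triD n (fun i => f (i+2))

def triM (n : ℕ) (f : ℕ → ℚ) : Matrix (Fin n) (Fin n) ℚ :=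
  Matrix.of fun i j =>
    if (i : ℕ) = (j : ℕ) then f i
    else if (i : ℕ) + 1 = (j : ℕ) ∨ (j : ℕ) + 1 = (i : ℕ) then 1 else 0

lemma triM_det (n : ℕ) : ∀ f, (triM n f).det = triD n f := by
  induction n using Nat.strong_induction_on with
  | _ n ih =>
    match n with
    | 0 => intro f; simp [triD, Matrix.det_isEmpty]
    | 1 => intro f; simp [triD, triM, Matrix.det_fin_one]
    | (m+2) =>
      intro f
      rw [Matrix.det_succ_row_zero, Fin.sum_univ_succ, Fin.sum_univ_succ]
      have htail : ∀ j : Fin m,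
          (-1 : ℚ) ^ (((j.succ.succ : Fin (m+2))) : ℕ) * triM (m+2) f 0 j.succ.succ *
            ((triM (m+2) f).submatrix Fin.succ (j.succ.succ).succAbove).det = 0 := by
        intro j
        have h : triM (m+2) f 0 j.succ.succ = 0 := by
          simp [triM, Fin.val_succ]
        rw [h]; ring
      rw [Finset.sum_eq_zero fun j _ => htail j, add_zero]
      -- minor at column 0
      have hm0 : (triM (m+2) f).submatrix Fin.succ ((0 : Fin (m+2)).succAbove)
          = triM (m+1) (fun i => f (i+1)) := by
        ext i j
        simp only [Matrix.submatrix_apply, Fin.zero_succAbove, triM, Matrix.of_apply,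
          Fin.val_succ]
        split_ifs <;> first | rfl | (exfalso; omega) | (congr 1; omega)
      -- minor at column 1
      have hm1 : ((triM (m+2) f).submatrix Fin.succ ((1 : Fin (m+2)).succAbove)).det
          = triD m (fun i => f (i+2)) := by
        rw [Matrix.det_succ_column_zero, Fin.sum_univ_succ]
        have h10 : (((1 : Fin (m+2)).succAbove 0) : ℕ) = 0 := rfl
        have htail2 : ∀ i : Fin m,
            (-1 : ℚ) ^ (((i.succ : Fin (m+1))) : ℕ) *
              ((triM (m+2) f).submatrix Fin.succ ((1 : Fin (m+2)).succAbove)) i.succ 0 *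
              ((((triM (m+2) f).submatrix Fin.succ ((1 : Fin (m+2)).succAbove)).submatrix
                i.succ.succAbove Fin.succ)).det = 0 := by
          intro i
          have h : ((triM (m+2) f).submatrix Fin.succ ((1 : Fin (m+2)).succAbove)) i.succ 0 = 0 := by
            simp only [Matrix.submatrix_apply, triM, Matrix.of_apply, Fin.val_succ]
            rw [h10]
            simp
          rw [h]; ring
        rw [Finset.sum_eq_zero fun i _ => htail2 i, add_zero]
        have h00 : ((triM (m+2) f).submatrix Fin.succ ((1 : Fin (m+2)).succAbove)) 0 0 = 1 := by
          simp only [Matrix.submatrix_apply, triM, Matrix.of_apply, Fin.val_succ]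
          rw [h10]
          simp
        have hsub : (((triM (m+2) f).submatrix Fin.succ ((1 : Fin (m+2)).succAbove)).submatrix
              (0 : Fin (m+1)).succAbove Fin.succ) = triM m (fun i => f (i+2)) := by
          ext i j
          have hsa : (((1 : Fin (m+2)).succAbove j.succ) : ℕ) = (j : ℕ) + 2 := by
            rw [Fin.succAbove_of_le_castSucc]
            · simp [Fin.val_succ]
            · simp [Fin.le_castSucc_iff, Fin.lt_iff_val_lt_val, Fin.val_succ, Fin.le_iff_val_le_val]
          simp only [Matrix.submatrix_apply, Fin.zero_succAbove, triM, Matrix.of_apply,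
            Fin.val_succ, hsa]
          split_ifs <;> first | rfl | (exfalso; omega) | (congr 1; omega)
        rw [h00, hsub, ih m (by omega)]
        simp
      -- entries of row 0
      have e0 : triM (m+2) f 0 0 = f 0 := by simp [triM]
      have e1 : triM (m+2) f 0 1 = 1 := by
        simp only [triM, Matrix.of_apply]
        norm_num
      simp only [Fin.succ_zero_eq_one]
      rw [hm0, hm1, e0, e1, ih (m+1) (by omega)]
      simp [triD]
      ring

lemma arm_triD (s : ℕ) (k p : ℕ → ℤ)
    (hp2 : p (s+2) = 0) (hp1 : p (s+1) = 1)
    (hrec : ∀ i, 1 ≤ i → i ≤ s → p i = k i * p (i+1) - p (i+2)) :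
    ∀ m j, 1 ≤ j → j + m = s + 1 →
      triD m (fun i => -(k (i+j) : ℚ)) = (-1)^m * (p j : ℚ) := by
  intro m
  induction m using Nat.strong_induction_on with
  | _ m ih =>
    match m with
    | 0 =>
      intro j hj h
      have hj' : j = s + 1 := by omega
      rw [hj']
      simp [triD, hp1]
    | 1 =>
      intro j hj h
      have hj' : j = s := by omega
      simp only [triD, zero_add]
      rw [hj', hrec s (by omega) le_rfl, hp1, hp2]
      push_cast
      ring
    | (m+2) =>
      intro j hj h
      simp only [triD]
      have e1 : (fun i => (fun i => -(k (i+j) : ℚ)) (i+1)) = fun i => -(k (i+(j+1)) : ℚ) := by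
        funext i
        show -(k ((i+1)+j) : ℚ) = -(k (i+(j+1)) : ℚ)
        rw [show (i+1)+j = i+(j+1) from by omega]
      have e2 : (fun i => (fun i => -(k (i+j) : ℚ)) (i+2)) = fun i => -(k (i+(j+2)) : ℚ) := by
        funext i
        show -(k ((i+2)+j) : ℚ) = -(k (i+(j+2)) : ℚ)
        rw [show (i+2)+j = i+(j+2) from by omega]
      rw [e1, e2, ih (m+1) (by omega) (j+1) (by omega) (by omega),
        ih m (by omega) (j+2) (by omega) (by omega)]
      have hjs : j ≤ s := by omega
      rw [hrec j hj hjs]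
      push_cast
      ring
lemma arm_pos (s : ℕ) (k p : ℕ → ℤ)
    (hp2 : p (s+2) = 0) (hp1 : p (s+1) = 1)
    (hrec : ∀ i, 1 ≤ i → i ≤ s → p i = k i * p (i+1) - p (i+2))
    (hk : ∀ i, 1 ≤ i → i ≤ s → 2 ≤ k i) :
    ∀ m j, 1 ≤ j → j + m = s + 1 → 1 ≤ p j ∧ p (j+1) ≤ p j := by
  intro m
  induction m with
  | zero =>
    intro j hj h
    have hj' : j = s + 1 := by omega
    rw [hj', hp1, show s + 1 + 1 = s + 2 from rfl, hp2]
    exact ⟨le_rfl, by norm_num⟩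
  | succ m ihm =>
    intro j hj h
    have hih := ihm (j+1) (by omega) (by omega)
    have hkj := hk j hj (by omega)
    have hr := hrec j hj (by omega)
    constructor <;> nlinarith [hih.1, hih.2]

lemma prod_Icc_fin {M : Type*} [CommMonoid M] (ν : ℕ) (F : ℕ → M) :
    ∏ l ∈ Finset.Icc 1 ν, F l = ∏ l : Fin ν, F (l.1+1) := by
  induction ν with
  | zero => simp
  | succ n ih =>
    rw [Finset.prod_Icc_succ_top (by omega), ih, Fin.prod_univ_castSucc]
    simp

lemma sum_Icc_fin {M : Type*} [AddCommMonoid M] (ν : ℕ) (F : ℕ → M) :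
    ∑ l ∈ Finset.Icc 1 ν, F l = ∑ l : Fin ν, F (l.1+1) := by
  induction ν with
  | zero => simp
  | succ n ih =>
    rw [Finset.sum_Icc_succ_top (by omega), ih, Fin.sum_univ_castSucc]
    simp

lemma triM_inv00 (n : ℕ) (hn : 0 < n) (f : ℕ → ℚ) :
    (triM n f)⁻¹ ⟨0, hn⟩ ⟨0, hn⟩
      = triD (n-1) (fun i => f (i+1)) / (triM n f).det := by
  obtain ⟨m, rfl⟩ : ∃ m, n = m + 1 := ⟨n - 1, by omega⟩
  rw [Matrix.inv_def, Matrix.smul_apply, Ring.inverse_eq_inv']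
  have h0 : (⟨0, hn⟩ : Fin (m+1)) = 0 := rfl
  rw [h0, Matrix.adjugate_fin_succ_eq_det_submatrix]
  have hsub : (triM (m+1) f).submatrix (Fin.succAbove 0) (Fin.succAbove 0)
      = triM m (fun i => f (i+1)) := by
    ext i j
    simp only [Matrix.submatrix_apply, Fin.zero_succAbove, triM, Matrix.of_apply, Fin.val_succ]
    split_ifs <;> first | rfl | (exfalso; omega) | (congr 1; omega)
  rw [hsub, triM_det, triM_det]
  simp [smul_eq_mul, div_eq_inv_mul]

/-- The index set `V = {c} ∪ {(l,i) : 1 ≤ l ≤ ν, 1 ≤ i ≤ s l}` of the star-shaped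
plumbing graph: `none` is the central node `c`, and `some ⟨l, i⟩` is the node on the
`(l+1)`-st arm in position `i+1` (so arms are labelled `1, …, ν` and positions
`1, …, s l` in the paper's conventions). -/
abbrev PlumbV (ν : ℕ) (s : ℕ → ℕ) : Type :=
  Option ((l : Fin ν) × Fin (s (l.val + 1)))

/-- The intersection matrix `Q` of the star-shaped plumbing graph:
`Q(c,c) = e₀`; `Q(c,(l,1)) = Q((l,1),c) = 1`; `Q((l,i),(l,i)) = -k l i`;
`Q((l,i),(l,i+1)) = Q((l,i+1),(l,i)) = 1`; all other entries `0`. -/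
def plumbQ (ν : ℕ) (s : ℕ → ℕ) (e₀ : ℤ) (k : ℕ → ℕ → ℤ) :
    Matrix (PlumbV ν s) (PlumbV ν s) ℤ :=
  Matrix.of fun v w =>
    match v, w with
    | none, none => e₀
    | none, some li => if (li.2 : ℕ) = 0 then 1 else 0
    | some li, none => if (li.2 : ℕ) = 0 then 1 else 0
    | some li, some li' =>
        if li.1 = li'.1 then
          (if (li.2 : ℕ) = (li'.2 : ℕ) then -k (li.1.val + 1) ((li.2 : ℕ) + 1)
           else if (li.2 : ℕ) + 1 = (li'.2 : ℕ) ∨ (li'.2 : ℕ) + 1 = (li.2 : ℕ) then 1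
           else 0)
        else 0


def sigmaFinSuccEquiv (n : ℕ) (m : Fin (n+1) → Type*) :
    (m 0 ⊕ (Σ i : Fin n, m i.succ)) ≃ Σ i : Fin (n+1), m i where
  toFun x := Sum.rec (fun a => ⟨0, a⟩) (fun p => ⟨p.1.succ, p.2⟩) x
  invFun y :=
    Fin.cases (motive := fun i => m i → (m 0 ⊕ Σ i : Fin n, m i.succ))
      (fun a => Sum.inl a) (fun i a => Sum.inr ⟨i, a⟩) y.1 y.2
  left_inv := by rintro (a | ⟨i, a⟩) <;> simp
  right_inv := by
    rintro ⟨i, a⟩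
    induction i using Fin.cases <;> simp

lemma det_blockDiagonal'_fin :
    ∀ (n : ℕ) (m : Fin n → Type) [∀ i, Fintype (m i)] [∀ i, DecidableEq (m i)]
      (M : ∀ i, Matrix (m i) (m i) ℚ),
      (Matrix.blockDiagonal' M).det = ∏ i, (M i).det := by
  intro n
  induction n with
  | zero =>
    intro m _ _ M
    haveI : IsEmpty ((i : Fin 0) × m i) := ⟨fun x => x.1.elim0⟩
    rw [Matrix.det_isEmpty]
    simp
  | succ n ih =>
    intro m _ _ M
    set E := sigmaFinSuccEquiv n m with hE
    have hsub : (Matrix.blockDiagonal' M).submatrix E E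
        = Matrix.fromBlocks (M 0) 0 0 (Matrix.blockDiagonal' (fun i : Fin n => M i.succ)) := by
      ext x y
      rcases x with a | ⟨i, a⟩ <;> rcases y with b | ⟨j, b⟩
      · simp [hE, sigmaFinSuccEquiv, Matrix.blockDiagonal'_apply_eq]
      · simp [hE, sigmaFinSuccEquiv,
          Matrix.blockDiagonal'_apply_ne _ _ _ (Fin.succ_ne_zero j).symm]
      · simp [hE, sigmaFinSuccEquiv, Matrix.blockDiagonal'_apply_ne _ _ _ (Fin.succ_ne_zero i)]
      · by_cases h : i = j
        · subst h
          simp [hE, sigmaFinSuccEquiv, Matrix.blockDiagonal'_apply_eq]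
        · simp [hE, sigmaFinSuccEquiv, h,
            Matrix.blockDiagonal'_apply_ne _ _ _ (fun hc => h (Fin.succ_injective _ hc)),
            Matrix.blockDiagonal'_apply_ne _ _ _ h]
    rw [← Matrix.det_submatrix_equiv_self E, hsub, Matrix.det_fromBlocks_zero₂₁, ih,
      Fin.prod_univ_succ]

section core
variable (ν : ℕ) (s : ℕ → ℕ) (e₀ : ℤ) (k : ℕ → ℕ → ℤ)

noncomputable def ArmM : ∀ _l : Fin ν, Matrix (Fin (s (_l.1+1))) (Fin (s (_l.1+1))) ℚ :=
  fun l => triM (s (l.1+1)) (fun i => -(k (l.1+1) (i+1) : ℚ))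

lemma det_plumb_rat
    (hs : ∀ l : Fin ν, 0 < s (l.1+1))
    (hne : ∀ l : Fin ν, (ArmM ν s k l).det ≠ 0) :
    ((plumbQ ν s e₀ k).map ((↑) : ℤ → ℚ)).det
      = (∏ l : Fin ν, (ArmM ν s k l).det)
        * ((e₀ : ℚ) - ∑ l : Fin ν, (ArmM ν s k l)⁻¹ ⟨0, hs l⟩ ⟨0, hs l⟩) := by
  classical
  set Qr := (plumbQ ν s e₀ k).map ((↑) : ℤ → ℚ) with hQr
  set Arm := ArmM ν s k with hArm
  set D := Matrix.blockDiagonal' Arm with hDdef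
  set B : Matrix Unit ((l : Fin ν) × Fin (s (l.1+1))) ℚ :=
    Matrix.of fun _ x => if (x.2 : ℕ) = 0 then 1 else 0 with hBdef
  set C : Matrix ((l : Fin ν) × Fin (s (l.1+1))) Unit ℚ :=
    Matrix.of fun x _ => if (x.2 : ℕ) = 0 then 1 else 0 with hCdef
  set A : Matrix Unit Unit ℚ := Matrix.of fun _ _ => (e₀ : ℚ) with hAdef
  set e : Unit ⊕ ((l : Fin ν) × Fin (s (l.1+1))) ≃ PlumbV ν s :=
    (Equiv.sumComm _ _).trans (Equiv.optionEquivSumPUnit _).symm with hedef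
  -- the reindexed matrix is a block matrix
  have hsub : Qr.submatrix e e = Matrix.fromBlocks A B C D := by
    ext i j
    rcases i with i | ⟨li, ii⟩ <;> rcases j with j | ⟨lj, jj⟩
    · simp [hQr, plumbQ, hedef, hAdef]
    · simp [hQr, plumbQ, hedef, hBdef]
    · simp [hQr, plumbQ, hedef, hCdef]
    · by_cases h : li = lj
      · subst h
        simp [hQr, plumbQ, hedef, hDdef, Matrix.blockDiagonal'_apply_eq, hArm, ArmM, triM,
          apply_ite ((↑) : ℤ → ℚ)]
      · simp [hQr, plumbQ, hedef, hDdef, Matrix.blockDiagonal'_apply_ne _ _ _ h, h]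
  -- invertibility
  have hunit : ∀ l, IsUnit (Arm l).det := fun l => isUnit_iff_ne_zero.2 (hne l)
  have hleft : Matrix.blockDiagonal' (fun l => (Arm l)⁻¹) * D = 1 := by
    rw [hDdef, ← Matrix.blockDiagonal'_mul]
    rw [show (fun l => (Arm l)⁻¹ * Arm l) = fun l : Fin ν =>
      (1 : Matrix (Fin (s (l.1+1))) (Fin (s (l.1+1))) ℚ) from
      funext fun l => Matrix.nonsing_inv_mul _ (hunit l)]
    exact Matrix.blockDiagonal'_one
  haveI : Invertible D := invertibleOfLeftInverse _ _ hleft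
  have hDinv : D⁻¹ = Matrix.blockDiagonal' (fun l => (Arm l)⁻¹) :=
    Matrix.inv_eq_left_inv hleft
  have hdet1 : Qr.det = D.det * (A - B * ⅟D * C).det := by
    rw [← Matrix.det_submatrix_equiv_self e Qr, hsub, Matrix.det_fromBlocks₂₂]
  have hinvOf : (⅟D : Matrix _ _ ℚ) = D⁻¹ := by
    rw [Matrix.invOf_eq_nonsing_inv]
  -- compute the 1×1 Schur complement
  have hBDC : (B * D⁻¹ * C) () () = ∑ l : Fin ν, (Arm l)⁻¹ ⟨0, hs l⟩ ⟨0, hs l⟩ := by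
    rw [hDinv]
    have hBD : ∀ y : (l : Fin ν) × Fin (s (l.1+1)),
        (B * Matrix.blockDiagonal' (fun l => (Arm l)⁻¹)) () y
          = (Arm y.1)⁻¹ ⟨0, hs y.1⟩ y.2 := by
      intro y
      obtain ⟨ly, jy⟩ := y
      rw [Matrix.mul_apply, ← Finset.univ_sigma_univ, Finset.sum_sigma]
      rw [Finset.sum_eq_single ly]
      · rw [Finset.sum_eq_single (⟨0, hs ly⟩ : Fin (s (ly.1+1)))]
        · simp [hBdef, Matrix.blockDiagonal'_apply_eq]
        · intro b _ hb
          have : (b : ℕ) ≠ 0 := fun h => hb (Fin.ext h)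
          simp [hBdef, this]
        · simp
      · intro l _ hl
        apply Finset.sum_eq_zero
        intro i _
        rw [Matrix.blockDiagonal'_apply_ne _ _ _ hl]
        simp
      · simp
    rw [Matrix.mul_apply]
    rw [← Finset.univ_sigma_univ, Finset.sum_sigma]
    apply Finset.sum_congr rfl
    intro l _
    rw [Finset.sum_eq_single (⟨0, hs l⟩ : Fin (s (l.1+1)))]
    · rw [hBD ⟨l, ⟨0, hs l⟩⟩]
      simp [hCdef]
    · intro b _ hb
      have : (b : ℕ) ≠ 0 := fun h => hb (Fin.ext h)
      simp [hCdef, this]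
    · simp
  have hdet2 : (A - B * ⅟D * C).det
      = (e₀ : ℚ) - ∑ l : Fin ν, (Arm l)⁻¹ ⟨0, hs l⟩ ⟨0, hs l⟩ := by
    rw [Matrix.det_unique]
    have : (A - B * ⅟D * C) default default
        = A () () - (B * D⁻¹ * C) () () := by
      rw [hinvOf]; rfl
    rw [this, hBDC, hAdef]
    rfl
  rw [hdet1, hdet2, hDdef, det_blockDiagonal'_fin]

end core

/-- `det Q = (-1)^(|V|-1) * (e₀ p₁⋯p_ν + ∑_l q_l ∏_{l'≠l} p_{l'})`,
where `p l = p l 1` and `q l = p l 2` come from the downward recursion on each arm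
and `|V| = 1 + s 1 + ⋯ + s ν`. -/
theorem stmt_3 (ν : ℕ) (hν : 1 ≤ ν) (s : ℕ → ℕ)
    (hs : ∀ l, 1 ≤ l → l ≤ ν → 1 ≤ s l)
    (e₀ : ℤ) (k : ℕ → ℕ → ℤ)
    (hk : ∀ l i, 1 ≤ l → l ≤ ν → 1 ≤ i → i ≤ s l → 2 ≤ k l i)
    (p : ℕ → ℕ → ℤ)
    (hp2 : ∀ l, 1 ≤ l → l ≤ ν → p l (s l + 2) = 0)
    (hp1 : ∀ l, 1 ≤ l → l ≤ ν → p l (s l + 1) = 1)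
    (hrec : ∀ l i, 1 ≤ l → l ≤ ν → 1 ≤ i → i ≤ s l →
      p l i = k l i * p l (i + 1) - p l (i + 2)) :
    (plumbQ ν s e₀ k).det
      = (-1) ^ ((1 + ∑ l ∈ Finset.Icc 1 ν, s l) - 1)
        * (e₀ * ∏ l ∈ Finset.Icc 1 ν, p l 1
           + ∑ l ∈ Finset.Icc 1 ν, p l 2 * ∏ l' ∈ (Finset.Icc 1 ν).erase l, p l' 1) := by
  classical
  -- integer positivity of the p's
  have hposN : ∀ l, 1 ≤ l → l ≤ ν → 1 ≤ p l 1 := by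
    intro l h1 h2
    exact (arm_pos (s l) (k l) (p l) (hp2 l h1 h2) (hp1 l h1 h2)
      (fun i hi1 hi2 => hrec l i h1 h2 hi1 hi2) (fun i hi1 hi2 => hk l i h1 h2 hi1 hi2)
      (s l) 1 le_rfl (by omega)).1
  have hsFin : ∀ l : Fin ν, 0 < s (l.1 + 1) := fun l => hs (l.1 + 1) (by omega) (by omega)
  -- determinant of each arm
  have harm : ∀ l : Fin ν,
      (ArmM ν s k l).det = (-1) ^ (s (l.1+1)) * (p (l.1+1) 1 : ℚ) := by
    intro l
    have h1 : 1 ≤ l.1 + 1 := by omega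
    have h2 : l.1 + 1 ≤ ν := by omega
    have hD : (ArmM ν s k l).det
        = triD (s (l.1+1)) (fun i => -(k (l.1+1) (i+1) : ℚ)) := triM_det _ _
    rw [hD]
    exact arm_triD (s (l.1+1)) (k (l.1+1)) (p (l.1+1)) (hp2 _ h1 h2) (hp1 _ h1 h2)
      (fun i hi1 hi2 => hrec _ i h1 h2 hi1 hi2) (s (l.1+1)) 1 le_rfl (by omega)
  have harmq : ∀ l : Fin ν,
      triD (s (l.1+1) - 1) (fun i => -(k (l.1+1) (i+2) : ℚ))
        = (-1) ^ (s (l.1+1) - 1) * (p (l.1+1) 2 : ℚ) := by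
    intro l
    have h1 : 1 ≤ l.1 + 1 := by omega
    have h2 : l.1 + 1 ≤ ν := by omega
    have hs1 := hsFin l
    exact arm_triD (s (l.1+1)) (k (l.1+1)) (p (l.1+1)) (hp2 _ h1 h2) (hp1 _ h1 h2)
      (fun i hi1 hi2 => hrec _ i h1 h2 hi1 hi2) (s (l.1+1) - 1) 2 (by omega) (by omega)
  have hPne : ∀ l : Fin ν, ((p (l.1+1) 1 : ℚ)) ≠ 0 := by
    intro l
    have := hposN (l.1+1) (by omega) (by omega)
    exact_mod_cast (by omega : (p (l.1+1) 1 : ℤ) ≠ 0)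
  have hne : ∀ l : Fin ν, (ArmM ν s k l).det ≠ 0 := by
    intro l
    rw [harm l]
    exact mul_ne_zero (pow_ne_zero _ (by norm_num)) (hPne l)
  have hdet := det_plumb_rat ν s e₀ k hsFin hne
  -- the inverse diagonal entries
  have hinv : ∀ l : Fin ν,
      (ArmM ν s k l)⁻¹ ⟨0, hsFin l⟩ ⟨0, hsFin l⟩
        = ((-1) ^ (s (l.1+1) - 1) * (p (l.1+1) 2 : ℚ))
          / ((-1) ^ (s (l.1+1)) * (p (l.1+1) 1 : ℚ)) := by
    intro l
    have h := triM_inv00 (s (l.1+1)) (hsFin l) (fun i => -(k (l.1+1) (i+1) : ℚ))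
    have hfun : (fun i => (fun i => -(k (l.1+1) (i+1) : ℚ)) (i+1))
        = fun i => -(k (l.1+1) (i+2) : ℚ) := rfl
    rw [hfun] at h
    calc (ArmM ν s k l)⁻¹ ⟨0, hsFin l⟩ ⟨0, hsFin l⟩
        = triD (s (l.1+1) - 1) (fun i => -(k (l.1+1) (i+2) : ℚ))
            / (triM (s (l.1+1)) (fun i => -(k (l.1+1) (i+1) : ℚ))).det := h
      _ = _ := by rw [harmq l, show (triM (s (l.1+1)) (fun i => -(k (l.1+1) (i+1) : ℚ))).det
              = (ArmM ν s k l).det from rfl, harm l]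
  -- pass to ℚ
  apply (Int.cast_injective (α := ℚ))
  have hcast : ((plumbQ ν s e₀ k).det : ℚ)
      = ((plumbQ ν s e₀ k).map ((↑) : ℤ → ℚ)).det := by
    simpa [RingHom.mapMatrix_apply] using
      RingHom.map_det (Int.castRingHom ℚ) (plumbQ ν s e₀ k)
  rw [hcast, hdet]
  -- simplify using the computed values
  rw [Finset.prod_congr rfl (fun l _ => harm l),
    Finset.sum_congr rfl (fun l (_ : l ∈ Finset.univ) => hinv l)]
  -- right-hand side: cast and reindex
  push_cast
  rw [Nat.add_sub_cancel_left]
  rw [sum_Icc_fin ν (fun l => s l), prod_Icc_fin ν (fun l => (p l 1 : ℚ)),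
    sum_Icc_fin ν (fun l => (p l 2 : ℚ) * ∏ l' ∈ (Finset.Icc 1 ν).erase l, (p l' 1 : ℚ))]
  have herase : ∀ l : Fin ν,
      (∏ l' ∈ (Finset.Icc 1 ν).erase (l.1+1), (p l' 1 : ℚ))
        = (∏ l' : Fin ν, (p (l'.1+1) 1 : ℚ)) / (p (l.1+1) 1 : ℚ) := by
    intro l
    have hmem : l.1+1 ∈ Finset.Icc 1 ν := by
      simp only [Finset.mem_Icc]; omega
    rw [eq_div_iff (hPne l), ← prod_Icc_fin ν (fun l' => (p l' 1 : ℚ))]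
    exact Finset.prod_erase_mul _ _ hmem
  -- now a pure `Fin ν` computation
  rw [Finset.prod_mul_distrib, Finset.prod_pow_eq_pow_sum]
  have hterm : ∀ l : Fin ν,
      ((-1 : ℚ) ^ (s (l.1+1) - 1) * (p (l.1+1) 2 : ℚ))
          / ((-1) ^ (s (l.1+1)) * (p (l.1+1) 1 : ℚ))
        = -((p (l.1+1) 2 : ℚ) / (p (l.1+1) 1 : ℚ)) := by
    intro l
    obtain ⟨m, hm⟩ : ∃ m, s (l.1+1) = m + 1 := ⟨s (l.1+1) - 1, by have := hsFin l; omega⟩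
    rw [hm]
    simp only [Nat.add_sub_cancel]
    rw [pow_succ]
    have h1 : ((-1 : ℚ)) ^ m ≠ 0 := pow_ne_zero _ (by norm_num)
    rw [show ((-1 : ℚ)) ^ m * -1 * (p (l.1+1) 1 : ℚ)
        = ((-1 : ℚ)) ^ m * -((p (l.1+1) 1 : ℚ)) from by ring]
    rw [mul_div_mul_left _ _ h1, div_neg]
  simp only [hterm]
  rw [Finset.sum_neg_distrib, sub_neg_eq_add, mul_assoc]
  congr 1
  simp only [herase]
  rw [mul_add, Finset.mul_sum]
  congr 1
  · ring
  · exact Finset.sum_congr rfl fun l _ => by ring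
end

section
/- With Q the star-shaped plumbing intersection matrix described in the context, the adjugate matrix of Q satisfies adj(Q)_{c,c} = (−1)^{|V|−1} · p_1 ⋯ p_ν, and adj(Q)_{c,(l,i)} = (−1)^{|V|−1} · p^l_{i+1} · ∏_{l'≠l} p_{l'} for every 1 ≤ l ≤ ν and 1 ≤ i ≤ s_l, where |V| = 1 + s_1 + ⋯ + s_ν. -/
section AuxLemmas
open Matrix Finset

/-- Determinant of a tridiagonal matrix with diagonal `d (t+·)` and off-diagonal `1`,
in terms of a "continuant" function `P`. -/
lemma tridet (d : ℕ → ℤ) (P : ℕ → ℤ) (S : ℕ)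
    (hP : ∀ t, t < S → P t = d t * P (t + 1) - P (t + 2))
    (h1 : P S = 1) (h2 : P (S + 1) = 0) :
    ∀ n t, t + n = S →
      (Matrix.of fun i j : Fin n =>
        if (i : ℕ) = (j : ℕ) then d (t + i)
        else if (i : ℕ) + 1 = (j : ℕ) ∨ (j : ℕ) + 1 = (i : ℕ) then 1 else 0).det = P t := by
  intro n
  induction n using Nat.strong_induction_on with
  | _ n ih =>
    match n with
    | 0 =>
      intro t ht
      have : t = S := by omega
      subst this
      simp [Matrix.det_fin_zero, h1]
    | 1 =>
      intro t ht
      rw [Matrix.det_fin_one]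
      have ht' : t < S := by omega
      have : P (t+1) = 1 := by rw [show t + 1 = S by omega, h1]
      have h2' : P (t+2) = 0 := by rw [show t + 2 = S + 1 by omega, h2]
      simp [hP t ht', this, h2']
    | (n+2) =>
      intro t ht
      rw [Matrix.det_succ_row_zero]
      rw [Fin.sum_univ_succ, Fin.sum_univ_succ]
      have hz : ∀ j : Fin n, (Matrix.of fun i j : Fin (n+2) =>
          if (i : ℕ) = (j : ℕ) then d (t + i)
          else if (i : ℕ) + 1 = (j : ℕ) ∨ (j : ℕ) + 1 = (i : ℕ) then 1 else 0)
          0 j.succ.succ = 0 := by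
        intro j
        simp only [Matrix.of_apply, Fin.val_zero, Fin.val_succ]
        simp only [show ¬ ((0:ℕ) = (j:ℕ)+1+1) by omega, show ¬ ((0:ℕ)+1 = (j:ℕ)+1+1 ∨ (j:ℕ)+1+1+1 = 0) by omega, if_false]
      rw [Finset.sum_eq_zero (fun j _ => by rw [hz j]; ring)]
      rw [add_zero]
      -- the two minors
      have hm0 : ((Matrix.of fun i j : Fin (n+2) =>
          if (i : ℕ) = (j : ℕ) then d (t + i)
          else if (i : ℕ) + 1 = (j : ℕ) ∨ (j : ℕ) + 1 = (i : ℕ) then 1 else 0).submatrix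
            Fin.succ (Fin.succAbove 0)).det = P (t+1) := by
        rw [Fin.succAbove_zero]
        have : ((Matrix.of fun i j : Fin (n+2) =>
            if (i : ℕ) = (j : ℕ) then d (t + i)
            else if (i : ℕ) + 1 = (j : ℕ) ∨ (j : ℕ) + 1 = (i : ℕ) then 1 else 0).submatrix
              Fin.succ Fin.succ) = (Matrix.of fun i j : Fin (n+1) =>
            if (i : ℕ) = (j : ℕ) then d ((t+1) + i)
            else if (i : ℕ) + 1 = (j : ℕ) ∨ (j : ℕ) + 1 = (i : ℕ) then 1 else 0) := by
          ext i j
          simp only [Matrix.submatrix_apply, Matrix.of_apply, Fin.val_succ]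
          by_cases h : (i : ℕ) = (j : ℕ)
          · rw [if_pos (by omega), if_pos h, show t + (↑i + 1) = t + 1 + ↑i by omega]
          · rw [if_neg (by omega), if_neg h]
            by_cases h' : (i : ℕ) + 1 = (j : ℕ) ∨ (j : ℕ) + 1 = (i : ℕ)
            · rw [if_pos (by omega), if_pos h']
            · rw [if_neg (by omega), if_neg h']
        rw [this]
        exact ih (n+1) (by omega) (t+1) (by omega)
      have hm1 : ((Matrix.of fun i j : Fin (n+2) =>
          if (i : ℕ) = (j : ℕ) then d (t + i)
          else if (i : ℕ) + 1 = (j : ℕ) ∨ (j : ℕ) + 1 = (i : ℕ) then 1 else 0).submatrix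
            Fin.succ (Fin.succAbove 1)).det = P (t+2) := by
        set B := ((Matrix.of fun i j : Fin (n+2) =>
          if (i : ℕ) = (j : ℕ) then d (t + i)
          else if (i : ℕ) + 1 = (j : ℕ) ∨ (j : ℕ) + 1 = (i : ℕ) then 1 else 0).submatrix
            Fin.succ (Fin.succAbove 1)) with hB
        have hBv : ∀ j : Fin (n+1), ((Fin.succAbove 1 j : Fin (n+2)) : ℕ)
            = if (j : ℕ) = 0 then 0 else (j : ℕ) + 1 := by
          intro j
          rw [Fin.succAbove]
          rcases Nat.eq_zero_or_pos (j : ℕ) with h | h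
          · have hc : j.castSucc < (1 : Fin (n+2)) := by
              simp only [Fin.lt_def, Fin.coe_castSucc, Fin.val_one]; omega
            rw [if_pos hc, if_pos h]
            simpa using h
          · have hc : ¬ (j.castSucc < (1 : Fin (n+2))) := by
              simp only [Fin.lt_def, Fin.coe_castSucc, Fin.val_one]; omega
            have hc2 : ¬ ((j : ℕ) = 0) := by omega
            rw [if_neg hc, if_neg hc2]
            simp
        rw [Matrix.det_succ_column_zero]
        rw [Fin.sum_univ_succ]
        have hcol : ∀ i : Fin n, B i.succ 0 = 0 := by
          intro i
          simp only [hB, Matrix.submatrix_apply, Matrix.of_apply]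
          have h0 : ((Fin.succAbove 1 (0 : Fin (n+1)) : Fin (n+2)) : ℕ) = 0 := by
            rw [hBv]; simp
          rw [h0]
          simp only [Fin.val_succ]
          rw [if_neg (by omega), if_neg (by omega)]
        rw [Finset.sum_eq_zero (fun i _ => by rw [hcol i]; ring)]
        rw [add_zero]
        have hB00 : B 0 0 = 1 := by
          simp only [hB, Matrix.submatrix_apply, Matrix.of_apply]
          have h0 : ((Fin.succAbove 1 (0 : Fin (n+1)) : Fin (n+2)) : ℕ) = 0 := by
            rw [hBv]; simp
          rw [h0]
          simp [Fin.val_succ]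
        have hsub : (B.submatrix (Fin.succAbove 0) Fin.succ) = (Matrix.of fun i j : Fin n =>
            if (i : ℕ) = (j : ℕ) then d ((t+2) + i)
            else if (i : ℕ) + 1 = (j : ℕ) ∨ (j : ℕ) + 1 = (i : ℕ) then 1 else 0) := by
          rw [Fin.succAbove_zero]
          ext i j
          simp only [hB, Matrix.submatrix_apply, Matrix.of_apply, Fin.val_succ]
          have hj : ((Fin.succAbove 1 (j.succ) : Fin (n+2)) : ℕ) = (j : ℕ) + 2 := by
            rw [hBv]; simp
          rw [hj]
          by_cases h : (i : ℕ) = (j : ℕ)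
          · rw [if_pos (by omega), if_pos h, show t + (↑i + 1 + 1) = t + 2 + ↑i by omega]
          · rw [if_neg (by omega), if_neg h]
            by_cases h' : (i : ℕ) + 1 = (j : ℕ) ∨ (j : ℕ) + 1 = (i : ℕ)
            · rw [if_pos (by omega), if_pos h']
            · rw [if_neg (by omega), if_neg h']
        rw [hsub, ih n (by omega) (t+2) (by omega), hB00]
        simp
      rw [Fin.succ_zero_eq_one, hm0, hm1]
      have hd : (Matrix.of fun i j : Fin (n+2) =>
          if (i : ℕ) = (j : ℕ) then d (t + i)
          else if (i : ℕ) + 1 = (j : ℕ) ∨ (j : ℕ) + 1 = (i : ℕ) then 1 else 0) 0 0 = d t := by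
        simp
      have hd1 : (Matrix.of fun i j : Fin (n+2) =>
          if (i : ℕ) = (j : ℕ) then d (t + i)
          else if (i : ℕ) + 1 = (j : ℕ) ∨ (j : ℕ) + 1 = (i : ℕ) then 1 else 0) 0 1 = 1 := by
        simp only [Matrix.of_apply, Fin.val_zero, Fin.val_one]
        norm_num
      rw [hd, hd1, hP t (by omega)]
      simp only [Fin.val_zero, Fin.val_one, pow_zero, pow_one]
      ring

lemma contPos (S : ℕ) (p k : ℕ → ℤ)
    (hp1 : p (S + 1) = 1) (hp2 : p (S + 2) = 0)
    (hrec : ∀ i, 1 ≤ i → i ≤ S → p i = k i * p (i + 1) - p (i + 2))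
    (hk : ∀ i, 1 ≤ i → i ≤ S → 2 ≤ k i) :
    ∀ d j, j + d = S + 1 → 1 ≤ j → 0 ≤ p (j + 1) ∧ p (j + 1) < p j := by
  intro d
  induction d with
  | zero =>
    intro j hj _
    have : j = S + 1 := by omega
    subst this
    rw [show S + 1 + 1 = S + 2 by omega, hp1, hp2]
    norm_num
  | succ d ih =>
    intro j hj hj1
    have h1 := ih (j + 1) (by omega) (by omega)
    have hr := hrec j hj1 (by omega)
    have hkj := hk j hj1 (by omega)
    constructor
    · linarith [h1.1, h1.2]
    · nlinarith [h1.1, h1.2]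

lemma prodIcc (ν : ℕ) (f : ℕ → ℤ) : ∏ l : Fin ν, f (l.val + 1) = ∏ l ∈ Finset.Icc 1 ν, f l := by
  have h1 : ∏ l : Fin ν, f (l.val + 1) = ∏ l ∈ Finset.range ν, f (l + 1) :=
    Fin.prod_univ_eq_prod_range (fun j => f (j + 1)) ν
  rw [h1, ← Finset.Ico_add_one_right_eq_Icc, Finset.prod_Ico_eq_prod_range]
  simp only [Nat.add_sub_cancel, Nat.succ_sub_one]
  exact Finset.prod_congr rfl (fun i _ => by rw [add_comm])

lemma sumIcc (ν : ℕ) (f : ℕ → ℕ) : ∑ l : Fin ν, f (l.val + 1) = ∑ l ∈ Finset.Icc 1 ν, f l := by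
  have h1 : ∑ l : Fin ν, f (l.val + 1) = ∑ l ∈ Finset.range ν, f (l + 1) :=
    Fin.sum_univ_eq_sum_range (fun j => f (j + 1)) ν
  rw [h1, ← Finset.Ico_add_one_right_eq_Icc, Finset.sum_Ico_eq_sum_range]
  simp only [Nat.add_sub_cancel, Nat.succ_sub_one]
  exact Finset.sum_congr rfl (fun i _ => by rw [add_comm])

lemma sum_three (m : ℕ) (g : ℕ → ℤ) (c : ℤ) (i : ℕ) (hi : i < m) (hg : ∀ j, m ≤ j → g j = 0) :
    (∑ j ∈ Finset.range m, g j * ((if j = i then c else 0) + (if j + 1 = i then 1 else 0)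
        + (if j = i + 1 then 1 else 0)))
      = g i * c + (if i = 0 then 0 else g (i - 1)) + g (i + 1) := by
  have e1 : (∑ j ∈ Finset.range m, g j * (if j = i then c else 0)) = g i * c := by
    rw [Finset.sum_congr rfl (fun j _ => by rw [mul_ite, mul_zero])]
    rw [Finset.sum_ite_eq' (Finset.range m) i (fun j => g j * c)]
    rw [if_pos (Finset.mem_range.mpr hi)]
  have e3 : (∑ j ∈ Finset.range m, g j * (if j = i + 1 then 1 else 0)) = g (i + 1) := by
    rw [Finset.sum_congr rfl (fun j _ => by rw [mul_ite, mul_zero, mul_one])]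
    rw [Finset.sum_ite_eq' (Finset.range m) (i+1) (fun j => g j)]
    by_cases h : i + 1 < m
    · rw [if_pos (Finset.mem_range.mpr h)]
    · rw [if_neg (fun hmem => h (Finset.mem_range.mp hmem)), hg (i+1) (by omega)]
  have e2 : (∑ j ∈ Finset.range m, g j * (if j + 1 = i then 1 else 0))
      = (if i = 0 then 0 else g (i - 1)) := by
    rcases Nat.eq_zero_or_pos i with h | h
    · subst h
      rw [if_pos rfl]
      exact Finset.sum_eq_zero (fun j _ => by rw [if_neg (by omega), mul_zero])
    · rw [if_neg (by omega)]
      have hstep : (∑ j ∈ Finset.range m, g j * (if j + 1 = i then 1 else 0))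
          = ∑ j ∈ Finset.range m, (if j = i - 1 then g j else 0) :=
        Finset.sum_congr rfl (fun j _ => by
          by_cases hj : j + 1 = i
          · rw [if_pos hj, mul_one, if_pos (by omega : j = i - 1)]
          · rw [if_neg hj, mul_zero, if_neg (by omega : ¬ j = i - 1)])
      rw [hstep, Finset.sum_ite_eq' (Finset.range m) (i-1) (fun j => g j)]
      rw [if_pos (Finset.mem_range.mpr (by omega))]
  calc (∑ j ∈ Finset.range m, g j * ((if j = i then c else 0) + (if j + 1 = i then 1 else 0)
        + (if j = i + 1 then 1 else 0)))
      = (∑ j ∈ Finset.range m, (g j * (if j = i then c else 0) + g j * (if j + 1 = i then 1 else 0)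
        + g j * (if j = i + 1 then 1 else 0))) := Finset.sum_congr rfl (fun j _ => by ring)
    _ = g i * c + (if i = 0 then 0 else g (i - 1)) + g (i + 1) := by
        rw [Finset.sum_add_distrib, Finset.sum_add_distrib, e1, e2, e3]

end AuxLemmas

/-- The central row of the adjugate of the star-shaped plumbing
intersection matrix: `adj(Q)_{c,c} = (-1)^(|V|-1) p₁⋯p_ν` and
`adj(Q)_{c,(l,i)} = (-1)^(|V|-1) p^l_{i+1} ∏_{l'≠l} p_{l'}`, where
`|V| = 1 + s 1 + ⋯ + s ν`. -/
theorem stmt_4 (ν : ℕ) (hν : 1 ≤ ν) (s : ℕ → ℕ)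
    (hs : ∀ l, 1 ≤ l → l ≤ ν → 1 ≤ s l)
    (e₀ : ℤ) (k : ℕ → ℕ → ℤ)
    (hk : ∀ l i, 1 ≤ l → l ≤ ν → 1 ≤ i → i ≤ s l → 2 ≤ k l i)
    (p : ℕ → ℕ → ℤ)
    (hp2 : ∀ l, 1 ≤ l → l ≤ ν → p l (s l + 2) = 0)
    (hp1 : ∀ l, 1 ≤ l → l ≤ ν → p l (s l + 1) = 1)
    (hrec : ∀ l i, 1 ≤ l → l ≤ ν → 1 ≤ i → i ≤ s l →
      p l i = k l i * p l (i + 1) - p l (i + 2)) :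
    (plumbQ ν s e₀ k).adjugate none none
      = (-1) ^ ((1 + ∑ l ∈ Finset.Icc 1 ν, s l) - 1) * ∏ l ∈ Finset.Icc 1 ν, p l 1
    ∧ ∀ (l : Fin ν) (i : Fin (s (l.val + 1))),
      (plumbQ ν s e₀ k).adjugate none (some ⟨l, i⟩)
        = (-1) ^ ((1 + ∑ l ∈ Finset.Icc 1 ν, s l) - 1)
          * p (l.val + 1) ((i : ℕ) + 2)
          * ∏ l' ∈ (Finset.Icc 1 ν).erase (l.val + 1), p l' 1 := by
  simp only [Nat.add_sub_cancel_left]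
  set Q := plumbQ ν s e₀ k with hQ
  -- basic entry computations
  have hQns : ∀ x : (l : Fin ν) × Fin (s (l.val + 1)),
      Q none (some x) = (if ((x.2 : ℕ)) = 0 then (1:ℤ) else 0) := fun x => by rw [hQ]; rfl
  have hQsn : ∀ x : (l : Fin ν) × Fin (s (l.val + 1)),
      Q (some x) none = (if ((x.2 : ℕ)) = 0 then (1:ℤ) else 0) := fun x => by rw [hQ]; rfl
  have hQss : ∀ x y : (l : Fin ν) × Fin (s (l.val + 1)),
      Q (some x) (some y) = (if x.1 = y.1 then
          (if (x.2 : ℕ) = (y.2 : ℕ) then -k (x.1.val + 1) ((x.2 : ℕ) + 1)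
           else if (x.2 : ℕ) + 1 = (y.2 : ℕ) ∨ (y.2 : ℕ) + 1 = (x.2 : ℕ) then 1 else 0)
        else 0) := fun x y => by rw [hQ]; rfl
  -- Part A : the (c,c) entry
  have hcc : Q.adjugate none none
      = (-1 : ℤ) ^ (∑ l ∈ Finset.Icc 1 ν, s l) * ∏ l ∈ Finset.Icc 1 ν, p l 1 := by
    rw [Matrix.adjugate_apply]
    set M := Q.updateRow none (Pi.single none 1) with hM
    set e : (PUnit.{1} ⊕ ((l : Fin ν) × Fin (s (l.val + 1)))) ≃ PlumbV ν s :=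
      (Equiv.sumComm PUnit.{1} _).trans (Equiv.optionEquivSumPUnit _).symm with he
    rw [← Matrix.det_submatrix_equiv_self e M]
    have he1 : ∀ u, e (Sum.inl u) = none := fun u => rfl
    have he2 : ∀ x, e (Sum.inr x) = some x := fun x => rfl
    have hblock : M.submatrix e e = Matrix.fromBlocks 1 0
        (Matrix.of fun (x : (l : Fin ν) × Fin (s (l.val+1))) (_ : PUnit.{1}) => Q (some x) none)
        (Matrix.of fun x y => Q (some x) (some y)) := by
      ext i j
      cases i with
      | inl u =>
        cases j with
        | inl u' =>
          simp only [Matrix.submatrix_apply, he1, hM, Matrix.updateRow_self,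
            Matrix.fromBlocks_apply₁₁]
          rw [Pi.single_eq_same, Matrix.one_apply, if_pos (Subsingleton.elim u u')]
        | inr y =>
          simp only [Matrix.submatrix_apply, he1, he2, hM, Matrix.updateRow_self,
            Matrix.fromBlocks_apply₁₂]
          rw [Pi.single_eq_of_ne (by simp) 1, Matrix.zero_apply]
      | inr x =>
        cases j with
        | inl u' =>
          simp only [Matrix.submatrix_apply, he1, he2, hM, Matrix.fromBlocks_apply₂₁,
            Matrix.of_apply]
          rw [Matrix.updateRow_ne (by simp)]
        | inr y =>
          simp only [Matrix.submatrix_apply, he1, he2, hM, Matrix.fromBlocks_apply₂₂,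
            Matrix.of_apply]
          rw [Matrix.updateRow_ne (by simp)]
    rw [hblock, Matrix.det_fromBlocks_zero₁₂]
    have h11 : (1 : Matrix PUnit.{1} PUnit.{1} ℤ).det = 1 := by simp
    rw [h11, one_mul]
    -- block triangular structure
    have hBT : (Matrix.of fun x y : (l : Fin ν) × Fin (s (l.val+1)) =>
        Q (some x) (some y)).BlockTriangular Sigma.fst := by
      intro x y hxy
      show Q (some x) (some y) = 0
      rw [hQss, if_neg (ne_of_gt hxy)]
    rw [hBT.det_fintype]
    -- each block is tridiagonal
    have hblockdet : ∀ l : Fin ν,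
        ((Matrix.of fun x y : (l : Fin ν) × Fin (s (l.val+1)) =>
          Q (some x) (some y)).toSquareBlock Sigma.fst l).det
          = (-1 : ℤ) ^ (s (l.val + 1)) * p (l.val + 1) 1 := by
      intro l
      have hlle : l.val + 1 ≤ ν := l.isLt
      let el : Fin (s (l.val+1)) ≃ {x : (l' : Fin ν) × Fin (s (l'.val+1)) // x.1 = l} :=
        { toFun := fun i => ⟨⟨l, i⟩, rfl⟩
          invFun := fun x => ⟨x.1.2.1, by obtain ⟨⟨l', i'⟩, rfl⟩ := x; exact i'.2⟩
          left_inv := fun i => rfl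
          right_inv := fun x => by
            rcases x with ⟨⟨l', i'⟩, h⟩
            cases h
            rfl }
      rw [← Matrix.det_submatrix_equiv_self el]
      have hTeq : (((Matrix.of fun x y : (l : Fin ν) × Fin (s (l.val+1)) =>
            Q (some x) (some y)).toSquareBlock Sigma.fst l).submatrix el el)
          = (Matrix.of fun i j : Fin (s (l.val+1)) =>
              if (i : ℕ) = (j : ℕ) then (fun t => -k (l.val+1) (t+1)) (0 + (i:ℕ))
              else if (i : ℕ) + 1 = (j : ℕ) ∨ (j : ℕ) + 1 = (i : ℕ) then 1 else 0) := by
        ext i j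
        simp only [Matrix.submatrix_apply, Matrix.toSquareBlock_def, Matrix.of_apply]
        rw [hQss]
        show (if l = l then (if (i:ℕ) = (j:ℕ) then -k (l.val+1) ((i:ℕ)+1)
            else if (i:ℕ)+1 = (j:ℕ) ∨ (j:ℕ)+1 = (i:ℕ) then 1 else 0) else 0)
          = (if (i:ℕ) = (j:ℕ) then -k (l.val+1) (0 + (i:ℕ) + 1)
            else if (i:ℕ)+1 = (j:ℕ) ∨ (j:ℕ)+1 = (i:ℕ) then 1 else 0)
        rw [if_pos rfl, Nat.zero_add]
      rw [hTeq]
      have := tridet (fun t => -k (l.val+1) (t+1))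
        (fun t => (-1 : ℤ) ^ (s (l.val+1) + t) * p (l.val+1) (t+1)) (s (l.val+1))
        (fun t ht => by
          have hr := hrec (l.val+1) (t+1) (by omega) (by omega) (by omega) (by omega)
          simp only [show t+1+1 = t+2 from rfl, show t+1+2 = t+3 from by omega] at hr
          simp only [show s (l.val+1) + (t+1) = (s (l.val+1) + t) + 1 from by omega,
            show s (l.val+1) + (t+2) = (s (l.val+1) + t) + 2 from by omega,
            pow_succ]
          rw [hr]; ring)
        (by
          beta_reduce
          rw [hp1 (l.val+1) (by omega) (by omega)]
          rw [mul_one]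
          exact Even.neg_one_pow ⟨s (l.val+1), rfl⟩)
        (by
          beta_reduce
          rw [show s (l.val+1) + 1 + 1 = s (l.val+1) + 2 from by omega,
            hp2 (l.val+1) (by omega) (by omega), mul_zero])
        (s (l.val+1)) 0 (by omega)
      rw [this]
      simp
    rw [Finset.prod_congr rfl (fun l _ => hblockdet l)]
    rw [Finset.prod_mul_distrib, Finset.prod_pow_eq_pow_sum]
    rw [sumIcc ν s, prodIcc ν (fun l => p l 1)]
  refine ⟨hcc, ?_⟩
  -- Part B : the arm entries
  -- the vector of adjugate values along an arm, as a function of ℕ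
  set G : Fin ν → ℕ → ℤ := fun l j =>
    if h : j < s (l.val + 1) then Q.adjugate none (some ⟨l, ⟨j, h⟩⟩) else 0 with hG
  have hGlt : ∀ (l : Fin ν) (i : Fin (s (l.val + 1))),
      G l (i : ℕ) = Q.adjugate none (some ⟨l, i⟩) := by
    intro l i
    rw [hG]
    simp only []
    rw [dif_pos i.isLt]
  have hG0 : ∀ (l : Fin ν) (j : ℕ), s (l.val + 1) ≤ j → G l j = 0 := by
    intro l j hj
    rw [hG]
    simp only []
    rw [dif_neg (by omega)]
  -- the linear relations satisfied by the adjugate row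
  have hrel : ∀ (l : Fin ν) (j : ℕ), j < s (l.val + 1) →
      (if j = 0 then Q.adjugate none none else 0)
      + (G l j * (-k (l.val + 1) (j + 1)) + (if j = 0 then 0 else G l (j - 1))
          + G l (j + 1)) = 0 := by
    intro l j hj
    set i : Fin (s (l.val + 1)) := ⟨j, hj⟩ with hi
    have h0 : (Q.adjugate * Q) none (some ⟨l, i⟩)
        = (Q.det • (1 : Matrix (PlumbV ν s) (PlumbV ν s) ℤ)) none (some ⟨l, i⟩) := by
      rw [Matrix.adjugate_mul]
    rw [Matrix.mul_apply, Matrix.smul_apply, Matrix.one_apply_ne (by simp), smul_zero] at h0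
    rw [Fintype.sum_option] at h0
    have hfn : Q.adjugate none none * Q none (some ⟨l, i⟩)
        = (if j = 0 then Q.adjugate none none else 0) := by
      rw [hQns]
      show Q.adjugate none none * (if j = 0 then (1:ℤ) else 0) = _
      split_ifs <;> ring
    have hsig : (∑ x : (l' : Fin ν) × Fin (s (l'.val + 1)),
        Q.adjugate none (some x) * Q (some x) (some ⟨l, i⟩))
        = G l j * (-k (l.val + 1) (j + 1)) + (if j = 0 then 0 else G l (j - 1))
          + G l (j + 1) := by
      rw [← Finset.univ_sigma_univ, Finset.sum_sigma]
      rw [Finset.sum_eq_single l (fun l' _ hl' => Finset.sum_eq_zero (fun i' _ => by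
          rw [hQss]
          simp only []
          rw [if_neg hl', mul_zero]))
        (fun h => absurd (Finset.mem_univ l) h)]
      have hterm : ∀ i' : Fin (s (l.val + 1)),
          Q.adjugate none (some ⟨l, i'⟩) * Q (some ⟨l, i'⟩) (some ⟨l, i⟩)
          = (fun j' : ℕ => G l j' * ((if j' = j then -k (l.val + 1) (j + 1) else 0)
              + (if j' + 1 = j then 1 else 0) + (if j' = j + 1 then 1 else 0))) (i' : ℕ) := by
        intro i'
        simp only []
        rw [hGlt l i', hQss]
        simp only [if_pos rfl]
        show Q.adjugate none (some ⟨l, i'⟩) *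
            (if (i' : ℕ) = j then -k (l.val + 1) ((i' : ℕ) + 1)
             else if (i' : ℕ) + 1 = j ∨ j + 1 = (i' : ℕ) then 1 else 0) = _
        by_cases h1 : (i' : ℕ) = j
        · rw [if_pos h1, if_pos h1, if_neg (by omega), if_neg (by omega), h1]
          ring
        · rw [if_neg h1, if_neg h1]
          by_cases h2 : (i' : ℕ) + 1 = j
          · rw [if_pos (Or.inl h2), if_pos h2, if_neg (by omega)]
            ring
          · by_cases h3 : j + 1 = (i' : ℕ)
            · rw [if_pos (Or.inr h3), if_neg h2, if_pos (by omega)]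
              ring
            · rw [if_neg (by omega), if_neg h2, if_neg (by omega)]
              ring
      rw [Finset.sum_congr rfl (fun i' _ => hterm i')]
      rw [Fin.sum_univ_eq_sum_range (fun j' : ℕ => G l j' *
        ((if j' = j then -k (l.val + 1) (j + 1) else 0)
          + (if j' + 1 = j then 1 else 0) + (if j' = j + 1 then 1 else 0)))]
      exact sum_three (s (l.val + 1)) (G l) (-k (l.val + 1) (j + 1)) j hj (hG0 l)
    rw [hfn, hsig] at h0
    exact h0
  -- downward induction along each arm
  have hclaim : ∀ (l : Fin ν) (d j : ℕ), j + d = s (l.val + 1) →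
      G l j = G l (s (l.val + 1) - 1) * p (l.val + 1) (j + 2) := by
    intro l d
    induction d using Nat.strong_induction_on with
    | _ d ih =>
      intro j hj
      have hlle : l.val + 1 ≤ ν := l.isLt
      rcases d with _ | d
      · have hjm : j = s (l.val + 1) := by omega
        subst hjm
        rw [hG0 l _ (le_refl _), hp2 (l.val + 1) (by omega) (by omega), mul_zero]
      rcases d with _ | d
      · have hjm : j = s (l.val + 1) - 1 := by omega
        rw [hjm, show s (l.val + 1) - 1 + 2 = s (l.val + 1) + 1 by omega,
          hp1 (l.val + 1) (by omega) (by omega), mul_one]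
      · have hi1 : j + 1 < s (l.val + 1) := by omega
        have hr := hrel l (j + 1) hi1
        rw [if_neg (by omega), if_neg (by omega)] at hr
        simp only [show j + 1 - 1 = j from by omega, show j + 1 + 1 = j + 2 from by omega] at hr
        have e1 := ih (d + 1) (by omega) (j + 1) (by omega)
        have e2 := ih d (by omega) (j + 2) (by omega)
        have hpj := hrec (l.val + 1) (j + 2) (by omega) (by omega) (by omega) (by omega)
        simp only [show j + 2 + 1 = j + 3 from by omega,
          show j + 2 + 2 = j + 4 from by omega] at hpj
        simp only [show j + 1 + 2 = j + 3 from by omega,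
          show j + 2 + 2 = j + 4 from by omega] at e1 e2
        rw [e1, e2] at hr
        rw [hpj]
        nlinarith [hr]
  -- the base relation at the central vertex
  have hbase : ∀ l : Fin ν, Q.adjugate none none
      = G l (s (l.val + 1) - 1) * p (l.val + 1) 1 := by
    intro l
    have hlle : l.val + 1 ≤ ν := l.isLt
    have hm1 : 1 ≤ s (l.val + 1) := hs (l.val + 1) (by omega) (by omega)
    have hr := hrel l 0 (by omega)
    rw [if_pos rfl, if_pos rfl] at hr
    simp only [Nat.zero_add, add_zero] at hr
    have e0 := hclaim l (s (l.val + 1)) 0 (by omega)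
    have e1 := hclaim l (s (l.val + 1) - 1) 1 (by omega)
    simp only [Nat.zero_add] at e0
    rw [e0, e1] at hr
    have hp := hrec (l.val + 1) 1 (by omega) (by omega) (by omega) (by omega)
    simp only [show (1:ℕ) + 1 = 2 from rfl, show (1:ℕ) + 2 = 3 from rfl] at hp
    rw [hp]
    nlinarith [hr]
  -- conclusion
  intro l i
  have hlle : l.val + 1 ≤ ν := l.isLt
  have hpos : 0 < p (l.val + 1) 1 := by
    have h := contPos (s (l.val + 1)) (p (l.val + 1)) (k (l.val + 1))
      (hp1 (l.val + 1) (by omega) (by omega)) (hp2 (l.val + 1) (by omega) (by omega))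
      (fun i h1 h2 => hrec (l.val + 1) i (by omega) (by omega) h1 h2)
      (fun i h1 h2 => hk (l.val + 1) i (by omega) (by omega) h1 h2)
      (s (l.val + 1)) 1 (by omega) (le_refl 1)
    have := h.1
    have := h.2
    omega
  have hGi := hclaim l (s (l.val + 1) - (i : ℕ)) (i : ℕ) (by omega)
  have hIccmem : (l.val + 1) ∈ Finset.Icc 1 ν := Finset.mem_Icc.mpr ⟨by omega, by omega⟩
  have hprod := Finset.mul_prod_erase (Finset.Icc 1 ν) (fun l' => p l' 1) hIccmem
  apply mul_left_cancel₀ (ne_of_gt hpos)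
  rw [← hGlt l i, hGi]
  calc p (l.val + 1) 1 * (G l (s (l.val + 1) - 1) * p (l.val + 1) ((i : ℕ) + 2))
      = (G l (s (l.val + 1) - 1) * p (l.val + 1) 1) * p (l.val + 1) ((i : ℕ) + 2) := by ring
    _ = Q.adjugate none none * p (l.val + 1) ((i : ℕ) + 2) := by rw [← hbase l]
    _ = ((-1 : ℤ) ^ (∑ l ∈ Finset.Icc 1 ν, s l) * ∏ l ∈ Finset.Icc 1 ν, p l 1)
          * p (l.val + 1) ((i : ℕ) + 2) := by rw [hcc]
    _ = p (l.val + 1) 1 * ((-1 : ℤ) ^ (∑ l ∈ Finset.Icc 1 ν, s l)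
          * p (l.val + 1) ((i : ℕ) + 2)
          * ∏ l' ∈ (Finset.Icc 1 ν).erase (l.val + 1), p l' 1) := by
        rw [← hprod]
        ring
end

section
/- With Q the star-shaped plumbing intersection matrix described in the context, assume D := e_0 · p_1⋯p_ν + Σ_{l=1}^{ν} q_l ∏_{l'≠l} p_{l'} ≠ 0, let v^K ∈ ℚ^V have entries v^K(c) = −e_0 − 2 and v^K((l,i)) = k^l_i − 2, and let w = Q^{−1} v^K. If w(c) is an integer, then D divides (ν − 2) · p_1⋯p_ν − Σ_{l=1}^{ν} ∏_{l'≠l} p_{l'}. (This is the algebraic content of the paper's Corollary that N_Y is an integer when the canonical Spin^c structure of the plumbed Seifert fibered rational homology sphere is self-conjugate, since self-conjugacy forces all entries of Q^{−1}v^K to be integers.) -/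
/-- The vector `v^K` with `v^K(c) = -e₀ - 2` and `v^K((l,i)) = k l i - 2` whose
solution `w` of `Q w = v^K` is the canonical class of the plumbing graph. -/
noncomputable def plumbVK (ν : ℕ) (s : ℕ → ℕ) (e₀ : ℤ) (k : ℕ → ℕ → ℤ) :
    PlumbV ν s → ℚ :=
  fun v =>
    match v with
    | none => -(e₀ : ℚ) - 2
    | some li => (k (li.1.val + 1) (li.2.val + 1) : ℚ) - 2

/-- Auxiliary: the shifted arm values `b`, with `b l 0 = w(c) + 1`,
`b l i = w(l,i) + 1` for `1 ≤ i ≤ s_l`, and `b l i = 1` for `i > s_l`. -/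
def armB (ν : ℕ) (s : ℕ → ℕ) (w : PlumbV ν s → ℚ) (l : Fin ν) (i : ℕ) : ℚ :=
  if h : 1 ≤ i ∧ i ≤ s (l.val + 1) then w (some ⟨l, ⟨i - 1, by omega⟩⟩) + 1
  else if i = 0 then w none + 1 else 1

lemma tri_sum (n : ℕ) (f : Fin n → ℚ) (K : ℚ) (i : Fin n) :
    ∑ j : Fin n, (if (i:ℕ) = (j:ℕ) then K else if (i:ℕ)+1 = (j:ℕ) ∨ (j:ℕ)+1 = (i:ℕ) then 1 else 0) * f j
    = K * f i + (if h : (i:ℕ)+1 < n then f ⟨(i:ℕ)+1, h⟩ else 0)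
      + (if h : 1 ≤ (i:ℕ) then f ⟨(i:ℕ)-1, by omega⟩ else 0) := by
  have split : ∀ j : Fin n,
      (if (i:ℕ) = (j:ℕ) then K else if (i:ℕ)+1 = (j:ℕ) ∨ (j:ℕ)+1 = (i:ℕ) then 1 else 0) * f j
      = (if (i:ℕ) = (j:ℕ) then K * f j else 0) + (if (i:ℕ)+1 = (j:ℕ) then f j else 0)
        + (if (j:ℕ)+1 = (i:ℕ) then f j else 0) := by
    intro j
    split_ifs <;> first | (exfalso; omega) | ring
  rw [Finset.sum_congr rfl fun j _ => split j, Finset.sum_add_distrib, Finset.sum_add_distrib]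
  congr 1
  · congr 1
    · rw [Finset.sum_eq_single i]
      · rw [if_pos rfl]
      · intro j _ hj
        rw [if_neg (fun hc => hj (Fin.ext hc.symm))]
      · simp
    · by_cases h : (i:ℕ)+1 < n
      · rw [dif_pos h, Finset.sum_eq_single ⟨(i:ℕ)+1, h⟩]
        · rw [if_pos rfl]
        · intro j _ hj
          rw [if_neg (fun hc => hj (Fin.ext (by simp; omega)))]
        · simp
      · rw [dif_neg h, Finset.sum_eq_zero]
        intro j _
        rw [if_neg (by omega)]
  · by_cases h : 1 ≤ (i:ℕ)
    · rw [dif_pos h, Finset.sum_eq_single ⟨(i:ℕ)-1, by omega⟩]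
      · rw [if_pos (by simp; omega)]
      · intro j _ hj
        rw [if_neg (fun hc => hj (Fin.ext (by simp; omega)))]
      · simp
    · rw [dif_neg h, Finset.sum_eq_zero]
      intro j _
      rw [if_neg (by omega)]

lemma plumb_arm_raw (ν : ℕ) (s : ℕ → ℕ) (e₀ : ℤ) (k : ℕ → ℕ → ℤ) (w : PlumbV ν s → ℚ)
    (hw : ((plumbQ ν s e₀ k).map (fun z : ℤ => (z : ℚ))).mulVec w = plumbVK ν s e₀ k)
    (l : Fin ν) (i : Fin (s (l.val + 1))) :
    (if (i:ℕ) = 0 then w none else 0)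
      + ∑ j : Fin (s (l.val + 1)),
          (if (i:ℕ) = (j:ℕ) then (-(k (l.val + 1) ((i:ℕ)+1)) : ℚ)
           else if (i:ℕ)+1 = (j:ℕ) ∨ (j:ℕ)+1 = (i:ℕ) then 1 else 0) * w (some ⟨l,j⟩)
      = (k (l.val + 1) ((i:ℕ)+1) : ℚ) - 2 := by
  have ha := congrFun hw (some ⟨l, i⟩)
  simp only [Matrix.mulVec, dotProduct, Matrix.map_apply, plumbQ, plumbVK,
    Matrix.of_apply, Fintype.sum_option] at ha
  rw [← Finset.univ_sigma_univ, Finset.sum_sigma] at ha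
  rw [Finset.sum_eq_single l] at ha
  · rw [← ha]
    congr 1
    · split_ifs <;> simp
    · refine Finset.sum_congr rfl fun j _ => ?_
      simp only [if_pos rfl]
      push_cast [apply_ite (fun z : ℤ => (z : ℚ))]
      ring_nf
  · intro a _ hal
    refine Finset.sum_eq_zero fun j _ => ?_
    rw [if_neg (by simpa using Ne.symm hal)]
    simp
  · simp

lemma armB_rec (ν : ℕ) (s : ℕ → ℕ) (e₀ : ℤ) (k : ℕ → ℕ → ℤ) (w : PlumbV ν s → ℚ)
    (hw : ((plumbQ ν s e₀ k).map (fun z : ℤ => (z : ℚ))).mulVec w = plumbVK ν s e₀ k)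
    (l : Fin ν) (i : ℕ) (h1 : 1 ≤ i) (h2 : i ≤ s (l.val + 1)) :
    armB ν s w l (i - 1)
      = (k (l.val + 1) i : ℚ) * armB ν s w l i - armB ν s w l (i + 1) := by
  obtain ⟨t, rfl⟩ : ∃ t, i = t + 1 := ⟨i - 1, by omega⟩
  have htn : t < s (l.val + 1) := by omega
  have key := plumb_arm_raw ν s e₀ k w hw l ⟨t, htn⟩
  rw [tri_sum] at key
  simp only [Fin.val_mk, Nat.add_sub_cancel] at key ⊢
  have hBt1 : armB ν s w l (t + 1) = w (some ⟨l, ⟨t, htn⟩⟩) + 1 := by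
    rw [armB, dif_pos ⟨by omega, by omega⟩]
    simp only [Nat.add_sub_cancel]
  rw [hBt1]
  by_cases ht0 : t = 0
  · subst ht0
    simp only [if_pos rfl, dif_neg (by omega : ¬ (1:ℕ) ≤ 0)] at key
    have hB0 : armB ν s w l 0 = w none + 1 := by
      rw [armB, dif_neg (by omega), if_pos rfl]
    rw [hB0]
    by_cases h3 : 0 + 1 + 1 ≤ s (l.val + 1)
    · have hB2 : armB ν s w l (0 + 1 + 1) = w (some ⟨l, ⟨1, by omega⟩⟩) + 1 := by
        rw [armB, dif_pos ⟨by omega, h3⟩]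
      rw [dif_pos (by omega : (0:ℕ) + 1 < s (l.val + 1))] at key
      rw [hB2]
      push_cast at key ⊢
      linarith [key]
    · have hB2 : armB ν s w l (0 + 1 + 1) = 1 := by
        rw [armB, dif_neg (by omega), if_neg (by omega)]
      rw [dif_neg (by omega)] at key
      rw [hB2]
      push_cast at key ⊢
      linarith [key]
  · rw [if_neg ht0, dif_pos (by omega : 1 ≤ t)] at key
    have hBm : armB ν s w l t = w (some ⟨l, ⟨t - 1, by omega⟩⟩) + 1 := by
      rw [armB, dif_pos ⟨by omega, by omega⟩]
    rw [hBm]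
    by_cases h3 : t + 1 + 1 ≤ s (l.val + 1)
    · have hB2 : armB ν s w l (t + 1 + 1) = w (some ⟨l, ⟨t + 1, by omega⟩⟩) + 1 := by
        rw [armB, dif_pos ⟨by omega, h3⟩]
        simp only [Nat.add_sub_cancel]
      rw [dif_pos (by omega : t + 1 < s (l.val + 1))] at key
      rw [hB2]
      push_cast at key ⊢
      linarith [key]
    · have hB2 : armB ν s w l (t + 1 + 1) = 1 := by
        rw [armB, dif_neg (by omega), if_neg (by omega)]
      rw [dif_neg (by omega)] at key
      rw [hB2]
      push_cast at key ⊢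
      linarith [key]

lemma plumb_central (ν : ℕ) (s : ℕ → ℕ) (e₀ : ℤ) (k : ℕ → ℕ → ℤ) (w : PlumbV ν s → ℚ)
    (hw : ((plumbQ ν s e₀ k).map (fun z : ℤ => (z : ℚ))).mulVec w = plumbVK ν s e₀ k)
    (hS : ∀ l : Fin ν, 1 ≤ s (l.val + 1)) :
    (e₀ : ℚ) * (w none + 1) + ∑ l : Fin ν, armB ν s w l 1 = (ν : ℚ) - 2 := by
  have hc := congrFun hw none
  simp only [Matrix.mulVec, dotProduct, Matrix.map_apply, plumbQ, plumbVK,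
    Matrix.of_apply, Fintype.sum_option] at hc
  rw [← Finset.univ_sigma_univ, Finset.sum_sigma] at hc
  have hin : ∀ l : Fin ν,
      ∑ i : Fin (s (l.val + 1)), ((if (i:ℕ) = 0 then (1:ℤ) else 0 : ℤ) : ℚ) * w (some ⟨l, i⟩)
        = w (some ⟨l, ⟨0, hS l⟩⟩) := by
    intro l
    rw [Finset.sum_eq_single (⟨0, hS l⟩ : Fin (s (l.val + 1)))]
    · simp
    · intro j _ hj
      have : (j : ℕ) ≠ 0 := fun h => hj (Fin.ext h)
      simp [this]
    · simp
  rw [Finset.sum_congr rfl fun l _ => hin l] at hc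
  have hB1 : ∀ l : Fin ν, armB ν s w l 1 = w (some ⟨l, ⟨0, hS l⟩⟩) + 1 := by
    intro l
    rw [armB, dif_pos ⟨le_refl 1, hS l⟩]
  rw [Finset.sum_congr rfl fun l _ => hB1 l, Finset.sum_add_distrib]
  simp only [Finset.sum_const, Finset.card_univ, Fintype.card_fin, nsmul_eq_mul, mul_one]
  linarith [hc]

lemma plumb_key (ν : ℕ) (s : ℕ → ℕ) (e₀ : ℤ) (k : ℕ → ℕ → ℤ) (p : ℕ → ℕ → ℤ)
    (w : PlumbV ν s → ℚ)
    (hw : ((plumbQ ν s e₀ k).map (fun z : ℤ => (z : ℚ))).mulVec w = plumbVK ν s e₀ k)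
    (l : Fin ν)
    (hp2 : p (l.val + 1) (s (l.val + 1) + 2) = 0)
    (hp1 : p (l.val + 1) (s (l.val + 1) + 1) = 1)
    (hrec : ∀ i, 1 ≤ i → i ≤ s (l.val + 1) →
      p (l.val + 1) i = k (l.val + 1) i * p (l.val + 1) (i + 1) - p (l.val + 1) (i + 2)) :
    (p (l.val + 1) 2 : ℚ) * (w none + 1) - (p (l.val + 1) 1 : ℚ) * armB ν s w l 1 = -1 := by
  set n := s (l.val + 1) with hn
  -- C i = p_{i+1} b_{i-1} - p_i b_i is constant equal to -1
  have main : ∀ j : ℕ, j ≤ n →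
      (p (l.val + 1) (n + 1 - j + 1) : ℚ) * armB ν s w l (n + 1 - j - 1)
        - (p (l.val + 1) (n + 1 - j) : ℚ) * armB ν s w l (n + 1 - j) = -1 := by
    intro j
    induction j with
    | zero =>
      intro _
      have e1 : n + 1 - 0 + 1 = n + 2 := by omega
      have e2 : n + 1 - 0 = n + 1 := by omega
      rw [e1, e2, hp2, hp1]
      have hB : armB ν s w l (n + 1) = 1 := by
        rw [armB, dif_neg (by omega), if_neg (by omega)]
      rw [hB]
      norm_num
    | succ j ih =>
      intro hj
      set i := n + 1 - (j + 1) with hi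
      have hi1 : 1 ≤ i := by omega
      have hi2 : i ≤ n := by omega
      have e1 : n + 1 - j = i + 1 := by omega
      rw [e1] at ih
      simp only [Nat.add_sub_cancel] at ih
      have ihj := ih (by omega)
      have e4 : i + 1 + 1 = i + 2 := by omega
      rw [e4] at ihj
      have hb := armB_rec ν s e₀ k w hw l i hi1 hi2
      have hpr := hrec i hi1 hi2
      have hprq : (p (l.val + 1) i : ℚ)
          = (k (l.val + 1) i : ℚ) * (p (l.val + 1) (i + 1) : ℚ) - (p (l.val + 1) (i + 2) : ℚ) := by
        exact_mod_cast congrArg (fun z : ℤ => (z : ℚ)) hpr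
      rw [hb, hprq]
      linear_combination ihj
  have := main n (le_refl n)
  norm_num at this
  have hB0 : armB ν s w l 0 = w none + 1 := by
    rw [armB, dif_neg (by omega), if_pos rfl]
  rw [hB0] at this
  exact this

lemma reidx {M : Type*} [AddCommMonoid M] (ν : ℕ) (g : ℕ → M) :
    ∑ l ∈ Finset.Icc 1 ν, g l = ∑ l : Fin ν, g (l.val + 1) := by
  rw [← Finset.Ico_add_one_right_eq_Icc, Finset.sum_Ico_eq_sum_range]
  rw [Fin.sum_univ_eq_sum_range (fun l => g (l + 1))]
  exact Finset.sum_congr rfl fun i _ => by rw [add_comm 1 i]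

/-- If `D = e₀ p₁⋯p_ν + ∑_l q_l ∏_{l'≠l} p_{l'} ≠ 0`,
`w = Q⁻¹ v^K` (equivalently `Q w = v^K`), and the central coefficient `w(c)` is an
integer, then `D` divides `(ν-2) p₁⋯p_ν - ∑_l ∏_{l'≠l} p_{l'}`; this is the
algebraic content of the integrality of `N_Y` for self-conjugate canonical
`Spin^c` structures. -/
theorem stmt_6 (ν : ℕ) (hν : 1 ≤ ν) (s : ℕ → ℕ)
    (hs : ∀ l, 1 ≤ l → l ≤ ν → 1 ≤ s l)
    (e₀ : ℤ) (k : ℕ → ℕ → ℤ)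
    (hk : ∀ l i, 1 ≤ l → l ≤ ν → 1 ≤ i → i ≤ s l → 2 ≤ k l i)
    (p : ℕ → ℕ → ℤ)
    (hp2 : ∀ l, 1 ≤ l → l ≤ ν → p l (s l + 2) = 0)
    (hp1 : ∀ l, 1 ≤ l → l ≤ ν → p l (s l + 1) = 1)
    (hrec : ∀ l i, 1 ≤ l → l ≤ ν → 1 ≤ i → i ≤ s l →
      p l i = k l i * p l (i + 1) - p l (i + 2))
    (hD : e₀ * ∏ l ∈ Finset.Icc 1 ν, p l 1
        + ∑ l ∈ Finset.Icc 1 ν, p l 2 * ∏ l' ∈ (Finset.Icc 1 ν).erase l, p l' 1 ≠ 0)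
    (w : PlumbV ν s → ℚ)
    (hw : ((plumbQ ν s e₀ k).map (fun z : ℤ => (z : ℚ))).mulVec w = plumbVK ν s e₀ k)
    (hint : ∃ m : ℤ, w none = (m : ℚ)) :
    (e₀ * ∏ l ∈ Finset.Icc 1 ν, p l 1
        + ∑ l ∈ Finset.Icc 1 ν, p l 2 * ∏ l' ∈ (Finset.Icc 1 ν).erase l, p l' 1)
      ∣ (((ν : ℤ) - 2) * ∏ l ∈ Finset.Icc 1 ν, p l 1
          - ∑ l ∈ Finset.Icc 1 ν, ∏ l' ∈ (Finset.Icc 1 ν).erase l, p l' 1) := by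
  obtain ⟨m, hm⟩ := hint
  have hS : ∀ l : Fin ν, 1 ≤ s (l.val + 1) := fun l => hs _ (by omega) (by omega)
  have hcen := plumb_central ν s e₀ k w hw hS
  have hkey : ∀ l : Fin ν,
      (p (l.val + 1) 2 : ℚ) * (w none + 1) - (p (l.val + 1) 1 : ℚ) * armB ν s w l 1 = -1 :=
    fun l => plumb_key ν s e₀ k p w hw l (hp2 _ (by omega) (by omega))
      (hp1 _ (by omega) (by omega))
      (fun i hi1 hi2 => hrec _ i (by omega) (by omega) hi1 hi2)
  have hmem : ∀ l : Fin ν, l.val + 1 ∈ Finset.Icc 1 ν :=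
    fun l => Finset.mem_Icc.mpr ⟨by omega, by omega⟩
  set Pq : ℚ := ∏ l ∈ Finset.Icc 1 ν, (p l 1 : ℚ) with hPq
  have hPl : ∀ l : Fin ν,
      (p (l.val + 1) 1 : ℚ) * ∏ l' ∈ (Finset.Icc 1 ν).erase (l.val + 1), (p l' 1 : ℚ) = Pq :=
    fun l => (Finset.mul_prod_erase _ (fun x => (p x 1 : ℚ)) (hmem l)).trans hPq.symm
  have e1 : ∀ l : Fin ν,
      (p (l.val + 1) 2 : ℚ) * (∏ l' ∈ (Finset.Icc 1 ν).erase (l.val + 1), (p l' 1 : ℚ))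
          * (w none + 1)
        = Pq * armB ν s w l 1
          - ∏ l' ∈ (Finset.Icc 1 ν).erase (l.val + 1), (p l' 1 : ℚ) := by
    intro l
    have h1 := hkey l
    have h2 := hPl l
    set R := ∏ l' ∈ (Finset.Icc 1 ν).erase (l.val + 1), (p l' 1 : ℚ)
    linear_combination R * h1 + armB ν s w l 1 * h2
  have hsum : ∑ l : Fin ν,
      (p (l.val + 1) 2 : ℚ) * (∏ l' ∈ (Finset.Icc 1 ν).erase (l.val + 1), (p l' 1 : ℚ))
          * (w none + 1)
        = Pq * (∑ l : Fin ν, armB ν s w l 1)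
          - ∑ l : Fin ν, ∏ l' ∈ (Finset.Icc 1 ν).erase (l.val + 1), (p l' 1 : ℚ) := by
    rw [Finset.mul_sum, ← Finset.sum_sub_distrib]
    exact Finset.sum_congr rfl fun l _ => e1 l
  have mainQ : ((e₀ : ℚ) * Pq
        + ∑ l : Fin ν, (p (l.val + 1) 2 : ℚ)
            * ∏ l' ∈ (Finset.Icc 1 ν).erase (l.val + 1), (p l' 1 : ℚ)) * (w none + 1)
      = ((ν : ℚ) - 2) * Pq
        - ∑ l : Fin ν, ∏ l' ∈ (Finset.Icc 1 ν).erase (l.val + 1), (p l' 1 : ℚ) := by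
    rw [add_mul, Finset.sum_mul, hsum]
    linear_combination Pq * hcen
  refine ⟨m + 1, ?_⟩
  have cast_goal : ((((ν : ℤ) - 2) * ∏ l ∈ Finset.Icc 1 ν, p l 1
        - ∑ l ∈ Finset.Icc 1 ν, ∏ l' ∈ (Finset.Icc 1 ν).erase l, p l' 1 : ℤ) : ℚ)
      = (((e₀ * ∏ l ∈ Finset.Icc 1 ν, p l 1
          + ∑ l ∈ Finset.Icc 1 ν, p l 2 * ∏ l' ∈ (Finset.Icc 1 ν).erase l, p l' 1)
            * (m + 1) : ℤ) : ℚ) := by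
    push_cast
    rw [reidx ν (fun l => (p l 2 : ℚ) * ∏ l' ∈ (Finset.Icc 1 ν).erase l, (p l' 1 : ℚ)),
        reidx ν (fun l => ∏ l' ∈ (Finset.Icc 1 ν).erase l, (p l' 1 : ℚ)), ← hPq, ← hm]
    linear_combination -mainQ
  exact_mod_cast cast_goal
end

section
/- Let ν ≥ 1 be an integer, let p_1, …, p_ν be positive integers, let q_1, …, q_ν and e_0 be integers. Set P = p_1⋯p_ν, P_l = ∏_{l'≠l} p_{l'}, and H = −( e_0 P + Σ_{l=1}^{ν} q_l P_l ), and assume H > 0. Then for every integer i with H·i > (ν − 2)·P − Σ_{l=1}^{ν} P_l, one has 1 − e_0 i − Σ_{l=1}^{ν} ⌈ i q_l / p_l ⌉ ≥ 0. -/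
lemma ceil_mul_le_aux (a b : ℤ) (hb : 0 < b) : b * ⌈(a:ℚ)/(b:ℚ)⌉ ≤ a + b - 1 := by
  have hbq : (0:ℚ) < (b:ℚ) := by exact_mod_cast hb
  have h1 : ((⌈(a:ℚ)/(b:ℚ)⌉ : ℚ)) < (a:ℚ)/(b:ℚ) + 1 := Int.ceil_lt_add_one _
  have h2 : (b:ℚ) * (⌈(a:ℚ)/(b:ℚ)⌉ : ℚ) < (a:ℚ) + (b:ℚ) := by
    calc (b:ℚ) * (⌈(a:ℚ)/(b:ℚ)⌉ : ℚ) < (b:ℚ) * ((a:ℚ)/(b:ℚ) + 1) :=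
          mul_lt_mul_of_pos_left h1 hbq
      _ = (a:ℚ) + (b:ℚ) := by field_simp
  have h3 : b * ⌈(a:ℚ)/(b:ℚ)⌉ < a + b := by exact_mod_cast h2
  omega

/-- Nonnegativity of the Δ-sequence of the canonical `Spin^c`
structure beyond `N_Y`: with `P = p₁⋯p_ν`, `P_l = ∏_{l'≠l} p_{l'}`,
`H = -(e₀ P + ∑_l q_l P_l) > 0`, for every integer `i` with
`H·i > (ν-2)·P - ∑_l P_l` one has `1 - e₀ i - ∑_l ⌈i q_l / p_l⌉ ≥ 0`. -/
theorem stmt_7 (ν : ℕ) (hν : 1 ≤ ν) (p q : ℕ → ℤ)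
    (hp : ∀ l, 1 ≤ l → l ≤ ν → 0 < p l) (e₀ : ℤ)
    (hH : 0 < -(e₀ * ∏ l ∈ Finset.Icc 1 ν, p l
              + ∑ l ∈ Finset.Icc 1 ν, q l * ∏ l' ∈ (Finset.Icc 1 ν).erase l, p l')) :
    ∀ i : ℤ,
      (-(e₀ * ∏ l ∈ Finset.Icc 1 ν, p l
         + ∑ l ∈ Finset.Icc 1 ν, q l * ∏ l' ∈ (Finset.Icc 1 ν).erase l, p l')) * i
        > ((ν : ℤ) - 2) * ∏ l ∈ Finset.Icc 1 ν, p l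
          - ∑ l ∈ Finset.Icc 1 ν, ∏ l' ∈ (Finset.Icc 1 ν).erase l, p l' →
      0 ≤ 1 - e₀ * i - ∑ l ∈ Finset.Icc 1 ν, ⌈((i * q l : ℤ) : ℚ) / ((p l : ℤ) : ℚ)⌉ := by
  intro i hi
  set S := Finset.Icc 1 ν with hS
  have hpS : ∀ l ∈ S, 0 < p l := by
    intro l hl
    rw [hS, Finset.mem_Icc] at hl
    exact hp l hl.1 hl.2
  set P := ∏ l ∈ S, p l with hP
  have hPpos : 0 < P := Finset.prod_pos hpS
  have hPlpos : ∀ l ∈ S, 0 < ∏ l' ∈ S.erase l, p l' := by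
    intro l hl
    exact Finset.prod_pos (fun l' hl' => hpS l' (Finset.mem_of_mem_erase hl'))
  have hmul : ∀ l ∈ S, p l * ∏ l' ∈ S.erase l, p l' = P :=
    fun l hl => Finset.mul_prod_erase S p hl
  have hcard : (S.card : ℤ) = (ν : ℤ) := by
    rw [hS, Nat.card_Icc]; push_cast; omega
  have key : P * ∑ l ∈ S, ⌈((i * q l : ℤ) : ℚ) / ((p l : ℤ) : ℚ)⌉
      ≤ i * ∑ l ∈ S, q l * ∏ l' ∈ S.erase l, p l'
        + (ν : ℤ) * P - ∑ l ∈ S, ∏ l' ∈ S.erase l, p l' := by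
    have step1 : P * ∑ l ∈ S, ⌈((i * q l : ℤ) : ℚ) / ((p l : ℤ) : ℚ)⌉
        = ∑ l ∈ S, (∏ l' ∈ S.erase l, p l')
            * (p l * ⌈((i * q l : ℤ) : ℚ) / ((p l : ℤ) : ℚ)⌉) := by
      rw [Finset.mul_sum]
      refine Finset.sum_congr rfl (fun l hl => ?_)
      rw [← hmul l hl]; ring
    have step2 : ∑ l ∈ S, (∏ l' ∈ S.erase l, p l')
            * (p l * ⌈((i * q l : ℤ) : ℚ) / ((p l : ℤ) : ℚ)⌉)
        ≤ ∑ l ∈ S, (∏ l' ∈ S.erase l, p l') * (i * q l + p l - 1) := by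
      refine Finset.sum_le_sum (fun l hl => ?_)
      exact mul_le_mul_of_nonneg_left (ceil_mul_le_aux (i * q l) (p l) (hpS l hl))
        (le_of_lt (hPlpos l hl))
    have step3 : ∑ l ∈ S, (∏ l' ∈ S.erase l, p l') * (i * q l + p l - 1)
        = i * ∑ l ∈ S, q l * ∏ l' ∈ S.erase l, p l'
          + (ν : ℤ) * P - ∑ l ∈ S, ∏ l' ∈ S.erase l, p l' := by
      have : ∑ l ∈ S, (∏ l' ∈ S.erase l, p l') * (i * q l + p l - 1)
          = ∑ l ∈ S, (i * (q l * ∏ l' ∈ S.erase l, p l')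
              + (p l * ∏ l' ∈ S.erase l, p l') - ∏ l' ∈ S.erase l, p l') := by
        refine Finset.sum_congr rfl (fun l hl => ?_); ring
      rw [this]
      rw [Finset.sum_sub_distrib, Finset.sum_add_distrib, ← Finset.mul_sum]
      congr 1
      congr 1
      rw [Finset.sum_congr rfl hmul, Finset.sum_const, nsmul_eq_mul, hcard]
    linarith [step1 ▸ le_trans step2 (le_of_eq step3)]
  have h4 : 0 < P * (2 - e₀ * i - ∑ l ∈ S, ⌈((i * q l : ℤ) : ℚ) / ((p l : ℤ) : ℚ)⌉) := by
    nlinarith [key, hi]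
  have h5 : 0 < 2 - e₀ * i - ∑ l ∈ S, ⌈((i * q l : ℤ) : ℚ) / ((p l : ℤ) : ℚ)⌉ := by
    by_contra h
    push_neg at h
    nlinarith
  linarith
end

section
/- Let 𝔽₂ = ℤ/2, let R = 𝔽₂[U] be the polynomial ring in one variable, let k ≥ 1, and let a_1, …, a_k, b_1, …, b_k be natural numbers. Let C be the free R-module with basis x_0, …, x_k, y_1, …, y_k, and let d : C → C be the R-linear map determined by d y_j = 0 for all j, d x_0 = U^{a_1} y_1, d x_i = U^{b_i} y_i + U^{a_{i+1}} y_{i+1} for 0 < i < k, and d x_k = U^{b_k} y_k. Then d ∘ d = 0, and the dimension over 𝔽₂ of the U-torsion submodule of the homology module ker(d)/im(d) equals min over 0 ≤ j ≤ k of ( Σ_{i=1}^{j} a_i + Σ_{i=j+1}^{k} b_i ). -/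
open Polynomial

/-- The free `𝔽₂[U]`-module with basis `x_0, …, x_k` (indexed by `Fin (k+1)`, via
`Sum.inl`) and `y_1, …, y_k` (indexed by `Fin k`, via `Sum.inr`). -/
abbrev GrC (k : ℕ) : Type := (Fin (k + 1) ⊕ Fin k) → Polynomial (ZMod 2)

/-- The basis element `x_i` (for `0 ≤ i ≤ k`; otherwise `0`). -/
noncomputable def grX (k i : ℕ) : GrC k :=
  if h : i ≤ k then Pi.single (Sum.inl ⟨i, by omega⟩) 1 else 0

/-- The basis element `y_j` (for `1 ≤ j ≤ k`; otherwise `0`). -/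
noncomputable def grY (k j : ℕ) : GrC k :=
  if h : 1 ≤ j ∧ j ≤ k then Pi.single (Sum.inr ⟨j - 1, by omega⟩) 1 else 0

/-- The homology `ker d / im d` of an endomorphism `d` (as the quotient of `ker d`
by `im d ∩ ker d`, which equals `im d` whenever `d ∘ d = 0`). -/
abbrev homologyOf {R M : Type*} [CommRing R] [AddCommGroup M] [Module R M]
    (d : M →ₗ[R] M) : Type _ :=
  LinearMap.ker d ⧸ Submodule.comap (LinearMap.ker d).subtype (LinearMap.range d)

/-- The `u`-power-torsion submodule `{x | ∃ m, u^m • x = 0}` of a module. -/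
def uTorsion (R : Type*) [CommRing R] (u : R) (M : Type*) [AddCommGroup M]
    [Module R M] : Submodule R M where
  carrier := {x | ∃ m : ℕ, u ^ m • x = 0}
  zero_mem' := ⟨0, smul_zero _⟩
  add_mem' := by
    rintro x y ⟨m, hm⟩ ⟨mn, hn⟩
    refine ⟨m + mn, ?_⟩
    have h1 : u ^ (m + mn) • x = 0 := by
      rw [pow_add, mul_comm, mul_smul, hm, smul_zero]
    have h2 : u ^ (m + mn) • y = 0 := by
      rw [pow_add, mul_smul, hn, smul_zero]
    rw [smul_add, h1, h2, add_zero]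
  smul_mem' := by
    rintro r x ⟨m, hm⟩
    exact ⟨m, by rw [smul_comm, hm, smul_zero]⟩

namespace S11
noncomputable section


abbrev RP := Polynomial (ZMod 2)

/-- basis vector y_m of Fin k → RP (1-indexed, 0 outside [1,k]) -/
def ey (k m : ℕ) : Fin k → RP :=
  if h : 1 ≤ m ∧ m ≤ k then Pi.single ⟨m - 1, by omega⟩ 1 else 0

/-- column vectors -/
def vv (k : ℕ) (a b : ℕ → ℕ) (i : ℕ) : Fin k → RP :=
  (X : RP) ^ (b i) • ey k i + (X : RP) ^ (a (i + 1)) • ey k (i + 1)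

def SS (k : ℕ) (a b : ℕ → ℕ) : Submodule RP (Fin k → RP) :=
  Submodule.span RP (Set.range fun i : Fin (k + 1) => vv k a b i)

def tv (k : ℕ) (a b : ℕ → ℕ) (j : ℕ) : ℕ :=
  (∑ i ∈ Finset.Icc 1 j, a i) + ∑ i ∈ Finset.Icc (j + 1) k, b i

lemma add_self_zero {M : Type*} [AddCommGroup M] [Module RP M] (x : M) : x + x = 0 := by
  have h2 : (1 + 1 : RP) = 0 := by
    have : ((1 : ZMod 2) + 1 : ZMod 2) = 0 := by decide
    rw [← map_one (C : ZMod 2 →+* RP), ← map_add, this, map_zero]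
  calc x + x = (1 + 1 : RP) • x := by rw [add_smul, one_smul]
  _ = 0 := by rw [h2, zero_smul]

lemma ey_zero (k : ℕ) : ey k 0 = 0 := by simp [ey]

lemma ey_gt (k m : ℕ) (h : k < m) : ey k m = 0 := by
  rw [ey, dif_neg]; omega

lemma ey_apply (k m : ℕ) (l : Fin k) : ey k m l = if m = (l : ℕ) + 1 then 1 else 0 := by
  have hl : (l : ℕ) < k := l.isLt
  rw [ey]
  split_ifs with h1 h2 h2
  · rw [Pi.single_apply, if_pos]
    exact Fin.ext (by simp; omega)
  · rw [Pi.single_apply, if_neg]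
    intro hc
    exact h2 (by have := Fin.ext_iff.mp hc; simp at this; omega)
  · exact absurd (⟨by omega, by omega⟩ : 1 ≤ m ∧ m ≤ k) h1
  · simp

lemma vv_apply (k : ℕ) (a b : ℕ → ℕ) (i : ℕ) (l : Fin k) :
    vv k a b i l = (if i = (l : ℕ) + 1 then X ^ (b ((l : ℕ) + 1)) else 0)
      + (if i = (l : ℕ) then X ^ (a ((l : ℕ) + 1)) else 0) := by
  rw [vv]
  simp only [Pi.add_apply, Pi.smul_apply, smul_eq_mul, ey_apply, add_left_inj]
  congr 1
  · split_ifs with h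
    · rw [h, mul_one]
    · rw [mul_zero]
  · split_ifs with h
    · rw [h, mul_one]
    · rw [mul_zero]

/-- Evaluation of a linear combination of the columns at coordinate l. -/
lemma eval_sum (k : ℕ) (a b : ℕ → ℕ) (P : Fin (k + 1) → RP) (l : Fin k) :
    (∑ n : Fin (k + 1), P n • vv k a b n) l
      = P l.castSucc * X ^ (a ((l : ℕ) + 1)) + P l.succ * X ^ (b ((l : ℕ) + 1)) := by
  rw [Finset.sum_apply]
  simp only [Pi.smul_apply, smul_eq_mul, vv_apply, mul_add]
  rw [Finset.sum_add_distrib, add_comm (P l.castSucc * _)]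
  congr 1
  · rw [Finset.sum_eq_single l.succ]
    · have : ((l.succ : Fin (k+1)) : ℕ) = (l : ℕ) + 1 := by simp
      rw [if_pos this]
    · intro n _ hn
      rw [if_neg, mul_zero]
      intro hc
      exact hn (by rw [Fin.ext_iff, hc]; simp)
    · intro h; exact absurd (Finset.mem_univ _) h
  · rw [Finset.sum_eq_single l.castSucc]
    · have : ((l.castSucc : Fin (k+1)) : ℕ) = (l : ℕ) := by simp
      rw [if_pos this]
    · intro n _ hn
      rw [if_neg, mul_zero]
      intro hc
      exact hn (by rw [Fin.ext_iff, hc]; simp)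
    · intro h; exact absurd (Finset.mem_univ _) h


lemma tv_rec (k : ℕ) (a b : ℕ → ℕ) (l : ℕ) (hl : l + 1 ≤ k) :
    tv k a b l + a (l + 1) = tv k a b (l + 1) + b (l + 1) := by
  have h1 : ∑ i ∈ Finset.Icc 1 (l+1), a i = (∑ i ∈ Finset.Icc 1 l, a i) + a (l+1) :=
    Finset.sum_Icc_succ_top (by omega) a
  have h2 : ∑ i ∈ Finset.Icc (l+1) k, b i = b (l+1) + ∑ i ∈ Finset.Icc (l+2) k, b i := by
    rw [show l + 2 = l + 1 + 1 from rfl, Finset.Icc_add_one_left_eq_Ioc (l+1) k, ← Finset.add_sum_Ioc_eq_sum_Icc hl]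
  rw [tv, tv, h1, h2]
  ring

/-- the syzygy among the columns -/
lemma syzygy (k : ℕ) (a b : ℕ → ℕ) (j : ℕ) (hj : j ≤ k)
    (hmin : ∀ l, l ≤ k → tv k a b j ≤ tv k a b l) :
    ∑ n : Fin (k + 1), ((X : RP) ^ (tv k a b n - tv k a b j)) • vv k a b n = 0 := by
  funext l
  have hl : (l : ℕ) < k := l.isLt
  rw [eval_sum, Pi.zero_apply]
  have hcs : ((l.castSucc : Fin (k+1)) : ℕ) = (l : ℕ) := by simp
  have hsc : ((l.succ : Fin (k+1)) : ℕ) = (l : ℕ) + 1 := by simp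
  rw [hcs, hsc, ← pow_add, ← pow_add]
  have he : tv k a b (l : ℕ) - tv k a b j + a ((l : ℕ) + 1)
      = tv k a b ((l : ℕ) + 1) - tv k a b j + b ((l : ℕ) + 1) := by
    have h1 := tv_rec k a b (l : ℕ) (by omega)
    have h2 := hmin (l : ℕ) (by omega)
    have h3 := hmin ((l : ℕ) + 1) (by omega)
    omega
  rw [he]
  exact add_self_zero _

/-- upward reduction identity -/
lemma redup (k : ℕ) (a b : ℕ → ℕ) (m n : ℕ) (hm : 1 ≤ m) (hn : a m ≤ n) :
    (X : RP) ^ n • ey k m = (X : RP) ^ (n - a m) • vv k a b (m - 1)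
      + (X : RP) ^ (n - a m + b (m - 1)) • ey k (m - 1) := by
  have h1 : m - 1 + 1 = m := by omega
  rw [vv, h1, smul_add, smul_smul, smul_smul, ← pow_add, ← pow_add]
  have h2 : n - a m + a m = n := by omega
  rw [h2, add_comm ((X:RP) ^ (n - a m + b (m-1)) • ey k (m-1)) ((X:RP) ^ n • ey k m),
    add_assoc, add_self_zero, add_zero]

/-- downward reduction identity -/
lemma reddn (k : ℕ) (a b : ℕ → ℕ) (m n : ℕ) (hn : b m ≤ n) :
    (X : RP) ^ n • ey k m = (X : RP) ^ (n - b m) • vv k a b m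
      + (X : RP) ^ (n - b m + a (m + 1)) • ey k (m + 1) := by
  rw [vv, smul_add, smul_smul, smul_smul, ← pow_add, ← pow_add]
  have h2 : n - b m + b m = n := by omega
  rw [h2, add_assoc, add_self_zero, add_zero]


lemma vv_mem (k : ℕ) (a b : ℕ → ℕ) (i : ℕ) (hi : i ≤ k) : vv k a b i ∈ SS k a b :=
  Submodule.subset_span ⟨⟨i, by omega⟩, rfl⟩

lemma ey_coord (k : ℕ) (l : Fin k) : ey k ((l : ℕ) + 1) = Pi.single l 1 := by
  rw [ey, dif_pos ⟨by omega, by have := l.isLt; omega⟩]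
  have : (⟨(l : ℕ) + 1 - 1, by have := l.isLt; omega⟩ : Fin k) = l := Fin.ext (by simp)
  rw [this]

lemma single_eq_smul_ey (k : ℕ) (l : Fin k) (p : RP) :
    Pi.single l p = p • ey k ((l : ℕ) + 1) := by
  rw [ey_coord, ← Pi.single_smul, smul_eq_mul, mul_one]

lemma tor1 (k : ℕ) (a b : ℕ → ℕ) : ∀ m, m ≤ k → ∃ N, (X : RP) ^ N • ey k m ∈ SS k a b := by
  intro m
  induction m with
  | zero => exact fun _ => ⟨0, by rw [ey_zero, smul_zero]; exact (SS k a b).zero_mem⟩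
  | succ m ih =>
    intro hm
    obtain ⟨N, hN⟩ := ih (by omega)
    refine ⟨a (m + 1) + N, ?_⟩
    rw [redup k a b (m+1) (a (m+1) + N) (by omega) (by omega)]
    simp only [Nat.add_sub_cancel_left, Nat.add_sub_cancel]
    refine add_mem (Submodule.smul_mem _ _ (vv_mem k a b m (by omega))) ?_
    rw [add_comm N (b m), pow_add, mul_smul]
    exact Submodule.smul_mem _ _ hN

lemma torall (k : ℕ) (a b : ℕ → ℕ) (q : Fin k → RP) :
    ∃ N, (X : RP) ^ N • q ∈ SS k a b := by
  let TT : Submodule RP (Fin k → RP) :=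
    { carrier := {y | ∃ N, (X : RP) ^ N • y ∈ SS k a b}
      zero_mem' := ⟨0, by rw [smul_zero]; exact (SS k a b).zero_mem⟩
      add_mem' := by
        rintro x y ⟨N1, h1⟩ ⟨N2, h2⟩
        refine ⟨N1 + N2, ?_⟩
        rw [smul_add]
        refine add_mem ?_ ?_
        · rw [add_comm N1 N2, pow_add, mul_smul]
          exact Submodule.smul_mem _ _ h1
        · rw [pow_add, mul_smul]
          exact Submodule.smul_mem _ _ h2
      smul_mem' := by
        rintro r x ⟨N, hN⟩
        exact ⟨N, by rw [smul_comm]; exact Submodule.smul_mem _ _ hN⟩ }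
  have : q ∈ TT := by
    rw [← Finset.univ_sum_single q]
    refine sum_mem fun l _ => ?_
    rw [single_eq_smul_ey]
    exact TT.smul_mem _ (tor1 k a b ((l : ℕ) + 1) (by have := l.isLt; omega))
  exact this

/-- exponent profile for the basis -/
def cv (a b : ℕ → ℕ) (j m : ℕ) : ℕ := if m ≤ j then a m else b m

/-- candidate basis of the quotient -/
def bfun (k : ℕ) (a b : ℕ → ℕ) (j : ℕ) :
    (Σ l : Fin k, Fin (cv a b j ((l : ℕ) + 1))) → ((Fin k → RP) ⧸ SS k a b) :=
  fun s => (SS k a b).mkQ ((X : RP) ^ (s.2 : ℕ) • ey k ((s.1 : ℕ) + 1))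

lemma cl1 (k : ℕ) (a b : ℕ → ℕ) (j : ℕ) (hj : j ≤ k) :
    ∀ m, m ≤ j → ∀ n, (SS k a b).mkQ ((X : RP) ^ n • ey k m)
      ∈ Submodule.span (ZMod 2) (Set.range (bfun k a b j)) := by
  intro m
  induction m with
  | zero => intro _ n; rw [ey_zero, smul_zero, map_zero]; exact zero_mem _
  | succ m ih =>
    intro hm n
    by_cases hn : n < a (m + 1)
    · refine Submodule.subset_span ⟨⟨⟨m, by omega⟩, ⟨n, ?_⟩⟩, rfl⟩
      rw [cv, if_pos hm]
      exact hn
    · rw [redup k a b (m+1) n (by omega) (by omega)]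
      simp only [Nat.add_sub_cancel_left, Nat.add_sub_cancel]
      rw [map_add]
      have h0 : (SS k a b).mkQ ((X : RP) ^ (n - a (m+1)) • vv k a b m) = 0 :=
        (Submodule.Quotient.mk_eq_zero _).mpr
          (Submodule.smul_mem _ _ (vv_mem k a b m (by omega)))
      rw [h0, zero_add]
      exact ih (by omega) _

lemma cl2 (k : ℕ) (a b : ℕ → ℕ) (j : ℕ) :
    ∀ i m n, k + 1 ≤ m + i → j < m → (SS k a b).mkQ ((X : RP) ^ n • ey k m)
      ∈ Submodule.span (ZMod 2) (Set.range (bfun k a b j)) := by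
  intro i
  induction i with
  | zero =>
    intro m n hi _
    rw [ey_gt k m (by omega), smul_zero, map_zero]
    exact zero_mem _
  | succ i ih =>
    intro m n hi hjm
    by_cases hk : k < m
    · rw [ey_gt k m hk, smul_zero, map_zero]; exact zero_mem _
    · by_cases hn : n < b m
      · obtain ⟨m', rfl⟩ : ∃ m', m = m' + 1 := ⟨m - 1, by omega⟩
        refine Submodule.subset_span ⟨⟨⟨m', by omega⟩, ⟨n, ?_⟩⟩, rfl⟩
        show n < cv a b j (m' + 1)
        rw [cv, if_neg (by omega)]
        exact hn
      · rw [reddn k a b m n (by omega), map_add]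
        have h0 : (SS k a b).mkQ ((X : RP) ^ (n - b m) • vv k a b m) = 0 :=
          (Submodule.Quotient.mk_eq_zero _).mpr
            (Submodule.smul_mem _ _ (vv_mem k a b m (by omega)))
        rw [h0, zero_add]
        exact ih (m + 1) _ (by omega) (by omega)

lemma span_top (k : ℕ) (a b : ℕ → ℕ) (j : ℕ) (hj : j ≤ k) (x : (Fin k → RP) ⧸ SS k a b) :
    x ∈ Submodule.span (ZMod 2) (Set.range (bfun k a b j)) := by
  obtain ⟨q, rfl⟩ := Submodule.mkQ_surjective _ x
  rw [← Finset.univ_sum_single q, map_sum]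
  refine sum_mem fun l _ => ?_
  rw [single_eq_smul_ey]
  have hq : (q l) • ey k ((l : ℕ) + 1)
      = ((q l).sum fun e c => C c * X ^ e) • ey k ((l : ℕ) + 1) := by
    rw [Polynomial.sum_C_mul_X_pow_eq]
  rw [hq, Polynomial.sum_def, Finset.sum_smul, map_sum]
  refine sum_mem fun n _ => ?_
  have key : (SS k a b).mkQ ((C ((q l).coeff n) * X ^ n) • ey k ((l : ℕ) + 1))
      = ((q l).coeff n) • (SS k a b).mkQ ((X : RP) ^ n • ey k ((l : ℕ) + 1)) := by
    rw [mul_smul, map_smul, ← Polynomial.algebraMap_eq, algebraMap_smul]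
  rw [key]
  refine Submodule.smul_mem _ _ ?_
  by_cases hm : (l : ℕ) + 1 ≤ j
  · exact cl1 k a b j hj ((l : ℕ) + 1) hm n
  · exact cl2 k a b j k ((l : ℕ) + 1) n (by omega) (by omega)


lemma pol_zero (e : ℕ) (p y : RP) (h : y = p * X ^ e) (hb : ∀ nc, e ≤ nc → y.coeff nc = 0) :
    p = 0 ∧ y = 0 := by
  have hp : p = 0 := by
    ext n
    have h2 := hb (n + e) (by omega)
    rw [h, Polynomial.coeff_mul_X_pow] at h2
    simpa using h2
  exact ⟨hp, by rw [h, hp, zero_mul]⟩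

lemma mem_SS (k : ℕ) (a b : ℕ → ℕ) (x : Fin k → RP) :
    x ∈ SS k a b ↔ ∃ P : Fin (k+1) → RP, ∑ n : Fin (k+1), P n • vv k a b (n : ℕ) = x :=
  Submodule.mem_span_range_iff_exists_fun RP

lemma indep (k : ℕ) (a b : ℕ → ℕ) (j : ℕ) (hj : j ≤ k)
    (hmin : ∀ l, l ≤ k → tv k a b j ≤ tv k a b l) :
    LinearIndependent (ZMod 2) (bfun k a b j) := by
  classical
  rw [Fintype.linearIndependent_iff]
  intro g hg
  set w : Fin k → RP := ∑ s : (Σ l : Fin k, Fin (cv a b j ((l : ℕ) + 1))),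
      (g s) • ((X : RP) ^ (s.2 : ℕ) • ey k ((s.1 : ℕ) + 1)) with hw
  have hwS : w ∈ SS k a b := by
    rw [← Submodule.Quotient.mk_eq_zero]
    have : Submodule.Quotient.mk w = ((SS k a b).mkQ).restrictScalars (ZMod 2) w := rfl
    rw [this, hw, map_sum]
    simp only [map_smul]
    exact hg
  obtain ⟨p0, hp0⟩ := (mem_SS k a b w).mp hwS
  set jf : Fin (k+1) := ⟨j, by omega⟩ with hjf
  set P : Fin (k+1) → RP :=
    fun n => p0 n + p0 jf * X ^ (tv k a b (n : ℕ) - tv k a b j) with hPdef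
  have hPsum : ∑ n : Fin (k+1), P n • vv k a b (n : ℕ) = w := by
    simp only [hPdef, add_smul]
    rw [Finset.sum_add_distrib, hp0]
    have h2 : ∑ n : Fin (k+1),
        (p0 jf * X ^ (tv k a b (n : ℕ) - tv k a b j)) • vv k a b (n : ℕ)
        = p0 jf • ∑ n : Fin (k+1),
            (X : RP) ^ (tv k a b (n : ℕ) - tv k a b j) • vv k a b (n : ℕ) := by
      rw [Finset.smul_sum]
      exact Finset.sum_congr rfl fun n _ => (mul_smul _ _ _)
    rw [h2, syzygy k a b j hj hmin, smul_zero, add_zero]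
  have hPj : P jf = 0 := by
    rw [hPdef]
    simp only [hjf, Fin.val_mk]
    rw [Nat.sub_self, pow_zero, mul_one]
    exact add_self_zero _
  set PT : ℕ → RP := fun m => if h : m ≤ k then P ⟨m, by omega⟩ else 0 with hPT
  have hrow : ∀ l : Fin k,
      w l = PT (l : ℕ) * X ^ (a ((l : ℕ) + 1)) + PT ((l : ℕ) + 1) * X ^ (b ((l : ℕ) + 1)) := by
    intro l
    have hl := l.isLt
    rw [← hPsum, eval_sum]
    refine congrArg₂ (· + ·) (congrArg₂ (· * ·) ?_ rfl) (congrArg₂ (· * ·) ?_ rfl)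
    · rw [hPT]
      dsimp only
      rw [dif_pos (by omega : (l : ℕ) ≤ k)]
      exact congrArg P (Fin.ext (by simp))
    · rw [hPT]
      dsimp only
      rw [dif_pos (by omega : (l : ℕ) + 1 ≤ k)]
      exact congrArg P (Fin.ext (by simp))
  have hwl : ∀ l : Fin k,
      w l = ∑ n : Fin (cv a b j ((l : ℕ) + 1)), (g ⟨l, n⟩) • (X : RP) ^ (n : ℕ) := by
    intro l
    rw [hw, Finset.sum_apply, ← Finset.univ_sigma_univ, Finset.sum_sigma]
    rw [Finset.sum_eq_single l]
    · refine Finset.sum_congr rfl fun n _ => ?_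
      simp [ey_apply]
    · intro i _ hi
      refine Finset.sum_eq_zero fun n _ => ?_
      have : ¬ ((i : ℕ) + 1 = (l : ℕ) + 1) := by
        intro hc
        exact hi (Fin.ext (by omega))
      simp [ey_apply, this]
      intro hc; exact absurd (Fin.ext hc) hi
    · intro h; exact absurd (Finset.mem_univ _) h
  have hbound : ∀ l : Fin k, ∀ nc, cv a b j ((l : ℕ) + 1) ≤ nc → (w l).coeff nc = 0 := by
    intro l nc hnc
    rw [hwl, Polynomial.finset_sum_coeff]
    refine Finset.sum_eq_zero fun n _ => ?_
    have hn := n.isLt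
    rw [Polynomial.coeff_smul, Polynomial.coeff_X_pow, if_neg (by omega), smul_zero]
  have hup : ∀ i m, m + i = j → PT m = 0 := by
    intro i
    induction i with
    | zero =>
      intro m hm
      have : m = j := by omega
      subst this
      rw [hPT]
      dsimp only
      rw [dif_pos hj]
      exact hPj
    | succ i ih =>
      intro m hm
      have hm1 : PT (m + 1) = 0 := ih (m + 1) (by omega)
      have hmk : m < k := by omega
      have hr := hrow ⟨m, hmk⟩
      simp only [Fin.val_mk] at hr
      rw [hm1, zero_mul, add_zero] at hr
      have hcv : cv a b j (m + 1) = a (m + 1) := by rw [cv, if_pos (by omega)]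
      refine (pol_zero (a (m+1)) (PT m) (w ⟨m, hmk⟩) hr fun nc hnc => ?_).1
      exact hbound ⟨m, hmk⟩ nc (by rw [Fin.val_mk, hcv]; exact hnc)
  have hdn : ∀ i m, j + i = m → m ≤ k → PT m = 0 := by
    intro i
    induction i with
    | zero =>
      intro m hm _
      have : m = j := by omega
      subst this
      rw [hPT]
      dsimp only
      rw [dif_pos hj]
      exact hPj
    | succ i ih =>
      intro m hm hmk
      obtain ⟨m', rfl⟩ : ∃ m', m = m' + 1 := ⟨m - 1, by omega⟩
      have hm1 : PT m' = 0 := ih m' (by omega) (by omega)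
      have hmk' : m' < k := by omega
      have hr := hrow ⟨m', hmk'⟩
      simp only [Fin.val_mk] at hr
      rw [hm1, zero_mul, zero_add] at hr
      have hcv : cv a b j (m' + 1) = b (m' + 1) := by rw [cv, if_neg (by omega)]
      refine (pol_zero (b (m'+1)) (PT (m'+1)) (w ⟨m', hmk'⟩) hr fun nc hnc => ?_).1
      exact hbound ⟨m', hmk'⟩ nc (by rw [Fin.val_mk, hcv]; exact hnc)
  have hPTall : ∀ m, m ≤ k → PT m = 0 := by
    intro m hm
    by_cases h : m ≤ j
    · exact hup (j - m) m (by omega) 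
    · exact hdn (m - j) m (by omega) hm
  have hw0 : ∀ l : Fin k, w l = 0 := by
    intro l
    have hl := l.isLt
    rw [hrow l, hPTall (l : ℕ) (by omega), hPTall ((l : ℕ) + 1) (by omega),
      zero_mul, zero_mul, add_zero]
  rintro ⟨l, n⟩
  have : g ⟨l, n⟩ = (w l).coeff (n : ℕ) := by
    rw [hwl, Polynomial.finset_sum_coeff]
    rw [Finset.sum_eq_single n]
    · rw [Polynomial.coeff_smul, Polynomial.coeff_X_pow, if_pos rfl, smul_eq_mul, mul_one]
    · intro n' _ hn'
      rw [Polynomial.coeff_smul, Polynomial.coeff_X_pow, if_neg, smul_zero]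
      intro hc
      exact hn' (Fin.ext (by omega))
    · intro h; exact absurd (Finset.mem_univ _) h
  rw [this, hw0, Polynomial.coeff_zero]


noncomputable def basQ (k : ℕ) (a b : ℕ → ℕ) (j : ℕ) (hj : j ≤ k)
    (hmin : ∀ l, l ≤ k → tv k a b j ≤ tv k a b l) :
    Module.Basis (Σ l : Fin k, Fin (cv a b j ((l : ℕ) + 1))) (ZMod 2) ((Fin k → RP) ⧸ SS k a b) :=
  Module.Basis.mk (indep k a b j hj hmin) (fun x _ => span_top k a b j hj x)

lemma finrank_QS (k : ℕ) (a b : ℕ → ℕ) (j : ℕ) (hj : j ≤ k)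
    (hmin : ∀ l, l ≤ k → tv k a b j ≤ tv k a b l) :
    Module.finrank (ZMod 2) ((Fin k → RP) ⧸ SS k a b) = tv k a b j := by
  rw [Module.finrank_eq_card_basis (basQ k a b j hj hmin), Fintype.card_sigma]
  simp only [Fintype.card_fin]
  rw [Fin.sum_univ_eq_sum_range (fun l => cv a b j (l + 1)) k]
  have h1 : ∑ i ∈ Finset.range k, cv a b j (i + 1) = ∑ m ∈ Finset.Icc 1 k, cv a b j m := by
    rw [← Finset.Ico_add_one_right_eq_Icc, Finset.sum_Ico_eq_sum_range]
    simp only [Nat.add_sub_cancel, Nat.succ_sub_one]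
    exact Finset.sum_congr rfl fun i _ => by rw [add_comm 1 i]
  rw [h1, tv]
  have h2 : Finset.Icc 1 k = Finset.Ioc 0 k := Finset.Icc_add_one_left_eq_Ioc 0 k
  have h3 : Finset.Icc 1 j = Finset.Ioc 0 j := Finset.Icc_add_one_left_eq_Ioc 0 j
  have h4 : Finset.Icc (j + 1) k = Finset.Ioc j k := Finset.Icc_add_one_left_eq_Ioc j k
  rw [h2, h3, h4, ← Finset.sum_Ioc_consecutive _ (Nat.zero_le j) hj]
  congr 1
  · refine Finset.sum_congr rfl fun m hm => ?_
    rw [Finset.mem_Ioc] at hm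
    rw [cv, if_pos hm.2]
  · refine Finset.sum_congr rfl fun m hm => ?_
    rw [Finset.mem_Ioc] at hm
    rw [cv, if_neg (by omega)]


section glue
variable (k : ℕ)

def iota : (Fin k → RP) →ₗ[RP] GrC k where
  toFun q := Sum.elim (fun _ => 0) q
  map_add' x y := by funext v; cases v <;> simp
  map_smul' c x := by funext v; cases v <;> simp

lemma iota_apply_inl (q : Fin k → RP) (i : Fin (k+1)) : iota k q (Sum.inl i) = 0 := rfl
lemma iota_apply_inr (q : Fin k → RP) (l : Fin k) : iota k q (Sum.inr l) = q l := rfl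

lemma iota_inj : Function.Injective (iota k) := by
  intro x y h
  funext l
  exact congrFun h (Sum.inr l)

lemma single_smul_one {ι : Type*} [DecidableEq ι] (v : ι) (p : RP) :
    (Pi.single v p : ι → RP) = p • (Pi.single v 1 : ι → RP) := by
  rw [← Pi.single_smul, smul_eq_mul, mul_one]

lemma iota_single (l : Fin k) (r : RP) :
    iota k (Pi.single l r) = Pi.single (Sum.inr l) r := by
  funext v
  cases v with
  | inl i =>
    rw [iota_apply_inl, Pi.single_eq_of_ne (by simp)]
  | inr m =>
    rw [iota_apply_inr, Pi.single_apply, Pi.single_apply]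
    simp only [Sum.inr.injEq]

lemma iota_ey (m : ℕ) : iota k (ey k m) = grY k m := by
  rw [ey, grY]
  split_ifs with h
  · exact iota_single k _ _
  · exact map_zero _

lemma grX_single (i : Fin (k+1)) : grX k (i : ℕ) = Pi.single (Sum.inl i) 1 := by
  rw [grX, dif_pos (by have := i.isLt; omega : (i : ℕ) ≤ k)]

lemma grY_single (l : Fin k) : grY k ((l : ℕ) + 1) = Pi.single (Sum.inr l) 1 := by
  rw [grY, dif_pos ⟨by omega, by have := l.isLt; omega⟩]
  congr 2

lemma grY_zero : grY k 0 = 0 := by rw [grY, dif_neg]; omega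

lemma grY_gt (m : ℕ) (h : k < m) : grY k m = 0 := by rw [grY, dif_neg]; omega

variable (a b : ℕ → ℕ) (d : GrC k →ₗ[RP] GrC k)

lemma d_grX (hk : 1 ≤ k)
    (hdx0 : d (grX k 0) = (X : RP) ^ (a 1) • grY k 1)
    (hdxk : d (grX k k) = (X : RP) ^ (b k) • grY k k)
    (hdxi : ∀ i, 0 < i → i < k →
      d (grX k i) = (X : RP) ^ (b i) • grY k i + (X : RP) ^ (a (i + 1)) • grY k (i + 1)) :
    ∀ i : Fin (k+1), d (grX k (i : ℕ)) = iota k (vv k a b (i : ℕ)) := by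
  intro i
  have hik := i.isLt
  rw [vv, map_add, map_smul, map_smul, iota_ey, iota_ey]
  rcases Nat.eq_zero_or_pos (i : ℕ) with h0 | hpos
  · rw [h0, hdx0, grY_zero, smul_zero, zero_add]
  · rcases Nat.lt_or_ge (i : ℕ) k with hlt | hge
    · exact hdxi (i : ℕ) hpos hlt
    · have hik2 : (i : ℕ) = k := by omega
      rw [hik2, hdxk, grY_gt k (k+1) (by omega), smul_zero, add_zero]

lemma d_y (hdy : ∀ j, 1 ≤ j → j ≤ k → d (grY k j) = 0) (l : Fin k) :
    d (Pi.single (Sum.inr l) 1) = 0 := by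
  rw [← grY_single]
  exact hdy ((l : ℕ) + 1) (by omega) (by have := l.isLt; omega)

lemma d_iota (hdy : ∀ j, 1 ≤ j → j ≤ k → d (grY k j) = 0) (q : Fin k → RP) :
    d (iota k q) = 0 := by
  rw [← Finset.univ_sum_single q, map_sum, map_sum]
  refine Finset.sum_eq_zero fun l _ => ?_
  rw [iota_single, single_smul_one, map_smul, d_y k d hdy, smul_zero]

lemma range_d (hk : 1 ≤ k)
    (hdy : ∀ j, 1 ≤ j → j ≤ k → d (grY k j) = 0)
    (hdx0 : d (grX k 0) = (X : RP) ^ (a 1) • grY k 1)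
    (hdxk : d (grX k k) = (X : RP) ^ (b k) • grY k k)
    (hdxi : ∀ i, 0 < i → i < k →
      d (grX k i) = (X : RP) ^ (b i) • grY k i + (X : RP) ^ (a (i + 1)) • grY k (i + 1)) :
    LinearMap.range d = Submodule.map (iota k) (SS k a b) := by
  have hdx := d_grX k a b d hk hdx0 hdxk hdxi
  rw [LinearMap.range_eq_map, ← (Pi.basisFun RP (Fin (k+1) ⊕ Fin k)).span_eq,
    Submodule.map_span, SS, Submodule.map_span]
  apply le_antisymm
  · rw [Submodule.span_le]
    rintro x ⟨y, ⟨v, rfl⟩, rfl⟩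
    rw [Pi.basisFun_apply]
    cases v with
    | inl i =>
      rw [← grX_single, hdx i]
      exact Submodule.subset_span ⟨vv k a b (i : ℕ), ⟨i, rfl⟩, rfl⟩
    | inr l =>
      rw [d_y k d hdy]
      exact zero_mem _
  · rw [Submodule.span_le]
    rintro x ⟨y, ⟨i, rfl⟩, rfl⟩
    refine Submodule.subset_span ⟨Pi.single (Sum.inl i) 1, ⟨Sum.inl i, by rw [Pi.basisFun_apply]⟩, ?_⟩
    rw [← grX_single, hdx i]


lemma ddzero (hk : 1 ≤ k)
    (hdy : ∀ j, 1 ≤ j → j ≤ k → d (grY k j) = 0)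
    (hdx0 : d (grX k 0) = (X : RP) ^ (a 1) • grY k 1)
    (hdxk : d (grX k k) = (X : RP) ^ (b k) • grY k k)
    (hdxi : ∀ i, 0 < i → i < k →
      d (grX k i) = (X : RP) ^ (b i) • grY k i + (X : RP) ^ (a (i + 1)) • grY k (i + 1)) :
    d ∘ₗ d = 0 := by
  have hdx := d_grX k a b d hk hdx0 hdxk hdxi
  apply LinearMap.pi_ext'
  intro v
  apply LinearMap.ext
  intro r
  simp only [LinearMap.comp_apply, LinearMap.zero_apply]
  have hsing : LinearMap.single RP (fun _ : Fin (k+1) ⊕ Fin k => RP) v r = Pi.single v r := rfl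
  rw [hsing, single_smul_one, map_smul, map_smul]
  cases v with
  | inl i =>
    rw [← grX_single, hdx i, d_iota k d hdy, smul_zero]
  | inr l =>
    rw [d_y k d hdy, map_zero, smul_zero]

def psi (hker : ∀ q, iota k q ∈ LinearMap.ker d) :
    (Fin k → RP) →ₗ[RP] homologyOf d :=
  (Submodule.comap (LinearMap.ker d).subtype (LinearMap.range d)).mkQ ∘ₗ
    LinearMap.codRestrict (LinearMap.ker d) (iota k) hker

lemma psi_eq_zero_iff (hker : ∀ q, iota k q ∈ LinearMap.ker d) (q : Fin k → RP) :
    psi k d hker q = 0 ↔ iota k q ∈ LinearMap.range d := by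
  rw [psi, LinearMap.comp_apply, Submodule.mkQ_apply, Submodule.Quotient.mk_eq_zero,
    Submodule.mem_comap]
  rfl

lemma ker_psi (hker : ∀ q, iota k q ∈ LinearMap.ker d)
    (hrange : LinearMap.range d = Submodule.map (iota k) (SS k a b)) :
    LinearMap.ker (psi k d hker) = SS k a b := by
  ext q
  rw [LinearMap.mem_ker, psi_eq_zero_iff, hrange]
  constructor
  · intro h
    have h2 : q ∈ Submodule.comap (iota k) (Submodule.map (iota k) (SS k a b)) :=
      Submodule.mem_comap.mpr h
    rwa [Submodule.comap_map_eq_of_injective (iota_inj k)] at h2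
  · exact fun h => Submodule.mem_map_of_mem h

lemma range_psi (hker : ∀ q, iota k q ∈ LinearMap.ker d)
    (hrange : LinearMap.range d = Submodule.map (iota k) (SS k a b)) :
    LinearMap.range (psi k d hker) = uTorsion RP Polynomial.X (homologyOf d) := by
  apply le_antisymm
  · rintro x ⟨q, rfl⟩
    obtain ⟨N, hN⟩ := torall k a b q
    refine ⟨N, ?_⟩
    rw [← map_smul]
    rw [← LinearMap.mem_ker, ker_psi k a b d hker hrange] at *
    exact hN
  · rintro x ⟨m, hm⟩
    obtain ⟨xk, rfl⟩ := Submodule.mkQ_surjective _ x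
    rw [← map_smul, Submodule.mkQ_apply, Submodule.Quotient.mk_eq_zero] at hm
    have hmem2 : (X : RP) ^ m • (xk : GrC k) ∈ LinearMap.range d := hm
    rw [hrange] at hmem2
    obtain ⟨s, _, heq⟩ := hmem2
    have hinl : ∀ i, (xk : GrC k) (Sum.inl i) = 0 := by
      intro i
      have h1 := congrFun heq (Sum.inl i)
      rw [iota_apply_inl] at h1
      have h2 : (X : RP) ^ m * (xk : GrC k) (Sum.inl i) = 0 := h1.symm
      rcases mul_eq_zero.mp h2 with h3 | h3
      · exact absurd h3 (pow_ne_zero m Polynomial.X_ne_zero)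
      · exact h3
    refine ⟨fun l => (xk : GrC k) (Sum.inr l), ?_⟩
    have hval : iota k (fun l => (xk : GrC k) (Sum.inr l)) = (xk : GrC k) := by
      funext v
      cases v with
      | inl i => rw [iota_apply_inl, hinl i]
      | inr l => rfl
    rw [psi, LinearMap.comp_apply, Submodule.mkQ_apply]
    congr 1
    exact Subtype.ext hval

end glue

end
end S11



set_option maxHeartbeats 1000000 in
open S11 in
/-- The graded-root complex over `R = 𝔽₂[U]` with
`d y_j = 0`, `d x_0 = U^{a_1} y_1`, `d x_i = U^{b_i} y_i + U^{a_{i+1}} y_{i+1}`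
(`0 < i < k`), `d x_k = U^{b_k} y_k` satisfies `d ∘ d = 0`, and the `𝔽₂`-dimension
of the `U`-torsion submodule of its homology equals
`min_{0 ≤ j ≤ k} (∑_{i=1}^j a_i + ∑_{i=j+1}^k b_i)`. -/
theorem stmt_11 (k : ℕ) (hk : 1 ≤ k) (a b : ℕ → ℕ)
    (d : GrC k →ₗ[Polynomial (ZMod 2)] GrC k)
    (hdy : ∀ j, 1 ≤ j → j ≤ k → d (grY k j) = 0)
    (hdx0 : d (grX k 0) = (X : Polynomial (ZMod 2)) ^ (a 1) • grY k 1)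
    (hdxk : d (grX k k) = (X : Polynomial (ZMod 2)) ^ (b k) • grY k k)
    (hdxi : ∀ i, 0 < i → i < k →
      d (grX k i) = (X : Polynomial (ZMod 2)) ^ (b i) • grY k i
        + (X : Polynomial (ZMod 2)) ^ (a (i + 1)) • grY k (i + 1)) :
    d ∘ₗ d = 0 ∧
    Module.finrank (ZMod 2)
        (RestrictScalars (ZMod 2) (Polynomial (ZMod 2))
          ↥(uTorsion (Polynomial (ZMod 2)) X (homologyOf d)))
      = (Finset.range (k + 1)).inf' ⟨0, Finset.mem_range.mpr (Nat.succ_pos k)⟩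
          (fun j => (∑ i ∈ Finset.Icc 1 j, a i) + ∑ i ∈ Finset.Icc (j + 1) k, b i) := by
  have hker : ∀ q, iota k q ∈ LinearMap.ker d :=
    fun q => LinearMap.mem_ker.mpr (d_iota k d hdy q)
  have hrange := range_d k a b d hk hdy hdx0 hdxk hdxi
  refine ⟨ddzero k a b d hk hdy hdx0 hdxk hdxi, ?_⟩
  obtain ⟨j, hjmem, hjeq⟩ := Finset.exists_mem_eq_inf'
    (⟨0, Finset.mem_range.mpr (Nat.succ_pos k)⟩ : (Finset.range (k+1)).Nonempty)
    (fun j => (∑ i ∈ Finset.Icc 1 j, a i) + ∑ i ∈ Finset.Icc (j + 1) k, b i)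
  rw [hjeq]
  have hj : j ≤ k := by have := Finset.mem_range.mp hjmem; omega
  have hmin : ∀ l, l ≤ k → tv k a b j ≤ tv k a b l := by
    intro l hl
    exact le_of_eq_of_le hjeq.symm
      (Finset.inf'_le _ (Finset.mem_range.mpr (by omega)))
  let E : ((Fin k → RP) ⧸ SS k a b) ≃ₗ[RP] ↥(uTorsion RP X (homologyOf d)) :=
    (Submodule.quotEquivOfEq _ _ (ker_psi k a b d hker hrange).symm) ≪≫ₗ
    (LinearMap.quotKerEquivRange (psi k d hker)) ≪≫ₗ
    (LinearEquiv.ofEq _ _ (range_psi k a b d hker hrange))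
  let E2 : ((Fin k → RP) ⧸ SS k a b) ≃ₗ[ZMod 2] ↥(uTorsion RP X (homologyOf d)) :=
    E.restrictScalars (ZMod 2)
  let E3 : ↥(uTorsion RP X (homologyOf d)) ≃ₗ[ZMod 2]
      RestrictScalars (ZMod 2) RP ↥(uTorsion RP X (homologyOf d)) :=
    { toFun := fun x => x
      invFun := fun x => x
      left_inv := fun _ => rfl
      right_inv := fun _ => rfl
      map_add' := fun _ _ => rfl
      map_smul' := fun c x => (algebraMap_smul RP c x).symm }
  have hfr := LinearEquiv.finrank_eq (E2 ≪≫ₗ E3)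
  rw [← hfr, finrank_QS k a b j hj hmin]
  rfl
end
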